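/- arXiv:2407.09070 — 3 statements merged into one kernel-verified Lean document; each statement's English description precedes it below -/
import Mathlib

section
/- Let A ∈ S(d; l_1,…,l_r) have exactly l distinct eigenvalues and a spectral decomposition A = P D Pᵀ with P a d×d real orthogonal matrix and D a d×d real diagonal matrix. Then for every ε > 0 there exists δ > 0 such that every B ∈ S(d; l_1,…,l_r) with max_{1≤i,j≤d} |A_{i,j} − B_{i,j}| < δ has exactly l distinct eigenvalues and admits a spectral decomposition B = Q F Qᵀ with Q a d×d real orthogonal matrix and F a d×d real diagonal matrix satisfying max_{1≤i≤d} |D_{i,i} − F_{i,i}| < ε and max_{1≤i,j≤d} |Q_{i,j} − P_{i,j}| < ε. -/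
open Matrix Finset

noncomputable section

open Filter

namespace Stmt10Aux

variable {d : ℕ}

lemma entry_conj (Q : Matrix (Fin d) (Fin d) ℝ) (μ : Fin d → ℝ) (i j : Fin d) :
    (Q * Matrix.diagonal μ * Qᵀ) i j = ∑ k, Q i k * μ k * Q j k := by
  rw [Matrix.mul_assoc]
  simp only [Matrix.mul_apply, Matrix.transpose_apply, Matrix.diagonal_apply, ite_mul,
    zero_mul, Finset.sum_ite_eq, Finset.mem_univ, if_pos]
  exact Finset.sum_congr rfl fun k _ => by ring

lemma tendsto_entry_mul {L : Filter ℕ} {f g : ℕ → Matrix (Fin d) (Fin d) ℝ}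
    {F G : Matrix (Fin d) (Fin d) ℝ}
    (hf : ∀ i j, Tendsto (fun n => f n i j) L (nhds (F i j)))
    (hg : ∀ i j, Tendsto (fun n => g n i j) L (nhds (G i j))) (i j : Fin d) :
    Tendsto (fun n => (f n * g n) i j) L (nhds ((F * G) i j)) := by
  simp only [Matrix.mul_apply]
  exact tendsto_finset_sum _ fun k _ => (hf i k).mul (hg k j)

lemma lim_mul_eq {L : Filter ℕ} [L.NeBot] {f g : ℕ → Matrix (Fin d) (Fin d) ℝ}
    {F G C : Matrix (Fin d) (Fin d) ℝ}
    (hf : ∀ i j, Tendsto (fun n => f n i j) L (nhds (F i j)))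
    (hg : ∀ i j, Tendsto (fun n => g n i j) L (nhds (G i j)))
    (h : ∀ i j, Tendsto (fun n => (f n * g n) i j) L (nhds (C i j))) : F * G = C := by
  ext i j
  exact tendsto_nhds_unique (tendsto_entry_mul hf hg i j) (h i j)

/-- combinatorial core: representatives -/
lemma combo {r : ℕ} (ll : Fin r → ℕ) (hll : ∀ j, 2 ≤ ll j) (J : Fin r → Finset (Fin d))
    (hdisj : ∀ j j', j ≠ j' → Disjoint (J j) (J j')) (hcard : ∀ j, (J j).card = ll j) :
    ∃ T : Finset (Fin d), T.card + ∑ j, ll j = d + r ∧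
      ∃ rep : Fin d → Fin d, (∀ i, rep i ∈ T) ∧
        (∀ μ : Fin d → ℝ, (∀ j, ∀ i ∈ J j, ∀ i' ∈ J j, μ i = μ i') →
          ∀ i, μ (rep i) = μ i) := by
  classical
  have hne : ∀ j, (J j).Nonempty := fun j => Finset.card_pos.mp (by rw [hcard j]; have := hll j; omega)
  set b : Fin r → Fin d := fun j => (J j).min' (hne j) with hb
  have hbmem : ∀ j, b j ∈ J j := fun j => (J j).min'_mem (hne j)
  have hbinj : Function.Injective b := by
    intro j j' h
    by_contra hjj
    exact (Finset.disjoint_left.mp (hdisj j j' hjj)) (hbmem j) (h ▸ hbmem j')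
  set U : Finset (Fin d) := Finset.univ.filter (fun i => ∀ j, i ∉ J j) with hU
  set T : Finset (Fin d) := U ∪ Finset.univ.image b with hT
  have hUb : Disjoint U (Finset.univ.image b) := by
    rw [Finset.disjoint_left]
    intro a ha hb'
    obtain ⟨j, -, rfl⟩ := Finset.mem_image.mp hb'
    exact (Finset.mem_filter.mp ha).2 j (hbmem j)
  have hbiU : Finset.univ.biUnion J ⊆ (Finset.univ : Finset (Fin d)) := Finset.subset_univ _
  have hcardbi : (Finset.univ.biUnion J).card = ∑ j, ll j := by
    rw [Finset.card_biUnion (fun j _ j' _ h => hdisj j j' h)]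
    simp [hcard]
  have hUcard : U.card + ∑ j, ll j = d := by
    have : U = Finset.univ \ Finset.univ.biUnion J := by
      ext i
      simp [hU, Finset.mem_sdiff]
    rw [this, Finset.card_sdiff_of_subset hbiU, hcardbi]
    have := Finset.card_le_card hbiU
    simp only [Finset.card_univ, Fintype.card_fin] at this ⊢
    omega
  have hTcard : T.card + ∑ j, ll j = d + r := by
    rw [hT, Finset.card_union_of_disjoint hUb, Finset.card_image_of_injective _ hbinj]
    simp only [Finset.card_univ, Fintype.card_fin]
    omega
  set rep : Fin d → Fin d := fun i => if h : ∃ j, i ∈ J j then b h.choose else i with hrep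
  refine ⟨T, hTcard, rep, ?_, ?_⟩
  · intro i
    by_cases h : ∃ j, i ∈ J j
    · simp only [hrep, dif_pos h]
      exact Finset.mem_union_right _ (Finset.mem_image_of_mem _ (Finset.mem_univ _))
    · simp only [hrep, dif_neg h]
      refine Finset.mem_union_left _ (Finset.mem_filter.mpr ⟨Finset.mem_univ _, ?_⟩)
      push_neg at h; exact h
  · intro μ hμ i
    by_cases h : ∃ j, i ∈ J j
    · simp only [hrep, dif_pos h]
      exact hμ h.choose _ (hbmem h.choose) _ h.choose_spec
    · simp [hrep, dif_neg h]

end Stmt10Aux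

/-- `hasCollision ll μ` : there are pairwise disjoint index sets `J 1, …, J r` with
`|J j| = l j` on which the values of `μ` coincide. -/
def hasCollision {d r : ℕ} (ll : Fin r → ℕ) (μ : Fin d → ℝ) : Prop :=
  ∃ J : Fin r → Finset (Fin d),
    (∀ j j' : Fin r, j ≠ j' → Disjoint (J j) (J j')) ∧
    (∀ j, (J j).card = ll j) ∧
    (∀ j : Fin r, ∀ i ∈ J j, ∀ i' ∈ J j, μ i = μ i')

/-- `S(d; l_1, …, l_r)` : real symmetric `d × d` matrices having, for each `j`, `l_j`
eigenvalues (with multiplicity) which coincide, over pairwise disjoint index sets. -/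
def SymCollide (d r : ℕ) (ll : Fin r → ℕ) : Set (Matrix (Fin d) (Fin d) ℝ) :=
  {x | ∃ (μ : Fin d → ℝ) (P : Matrix (Fin d) (Fin d) ℝ),
    P * Pᵀ = 1 ∧ Pᵀ * P = 1 ∧ x = P * Matrix.diagonal μ * Pᵀ ∧ hasCollision ll μ}

/-- continuity of the spectral decomposition on `S(d; l_1, …, l_r)` near a
matrix `A` with exactly `l = d - ∑_j (l_j - 1)` distinct eigenvalues. -/
theorem stmt10 (d r : ℕ) (hd : 2 ≤ d) (hr : 1 ≤ r) (ll : Fin r → ℕ)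
    (hll : ∀ j, 2 ≤ ll j ∧ ll j ≤ d) (hsum : ∑ j, ll j ≤ d)
    (A : Matrix (Fin d) (Fin d) ℝ) (hA : A ∈ SymCollide d r ll)
    (P : Matrix (Fin d) (Fin d) ℝ) (D : Fin d → ℝ)
    (hP : P * Pᵀ = 1 ∧ Pᵀ * P = 1) (hPD : A = P * Matrix.diagonal D * Pᵀ)
    (hAspec : (spectrum ℝ A).ncard = d + r - ∑ j, ll j)
    (ε : ℝ) (hε : 0 < ε) :
    ∃ δ > (0 : ℝ), ∀ B ∈ SymCollide d r ll,
      (∀ i j : Fin d, |A i j - B i j| < δ) →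
      (spectrum ℝ B).ncard = d + r - ∑ j, ll j ∧
      ∃ (Q : Matrix (Fin d) (Fin d) ℝ) (F : Fin d → ℝ),
        Q * Qᵀ = 1 ∧ Qᵀ * Q = 1 ∧ B = Q * Matrix.diagonal F * Qᵀ ∧
        (∀ i : Fin d, |D i - F i| < ε) ∧ (∀ i j : Fin d, |Q i j - P i j| < ε) := by
  classical
  by_contra hcon
  have key : ∀ δ : ℝ, 0 < δ → ∃ B, B ∈ SymCollide d r ll ∧
      (∀ i j : Fin d, |A i j - B i j| < δ) ∧
      ¬((spectrum ℝ B).ncard = d + r - ∑ j, ll j ∧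
        ∃ (Q : Matrix (Fin d) (Fin d) ℝ) (F : Fin d → ℝ),
          Q * Qᵀ = 1 ∧ Qᵀ * Q = 1 ∧ B = Q * Matrix.diagonal F * Qᵀ ∧
          (∀ i : Fin d, |D i - F i| < ε) ∧ (∀ i j : Fin d, |Q i j - P i j| < ε)) := by
    intro δ hδ
    by_contra hB
    push_neg at hB
    exact hcon ⟨δ, hδ, fun B hBS hclose => hB B hBS hclose⟩
  choose B hBS hBclose hBbad using fun n : ℕ => key (1/(n+1)) (by positivity)
  simp only [SymCollide, Set.mem_setOf_eq] at hBS
  choose μ Q hQ1 hQ2 hBeq hcolls using hBS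
  choose J hJd hJc hJv using hcolls
  set U : Ultrafilter ℕ := Ultrafilter.of atTop with hU
  have hUle : (U : Filter ℕ) ≤ atTop := Ultrafilter.of_le _
  obtain ⟨Jinf, hJinf⟩ := (U.map J).eq_pure_of_finite
  have hJev : ∀ᶠ n in (U : Filter ℕ), J n = Jinf := by
    have h1 : ∀ᶠ v in (↑(U.map J) : Filter (Fin r → Finset (Fin d))), v = Jinf := by
      simp [hJinf]
    rwa [Ultrafilter.coe_map, Filter.eventually_map] at h1
  -- entry bounds for the orthogonal matrices
  have hQsum : ∀ n i, ∑ k, Q n i k * Q n i k = 1 := by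
    intro n i
    have h0 := congrFun (congrFun (hQ1 n) i) i
    simpa [Matrix.mul_apply, Matrix.transpose_apply, Matrix.one_apply] using h0
  have hQbd : ∀ n i j, |Q n i j| ≤ 1 := by
    intro n i j
    have h1 : Q n i j * Q n i j ≤ ∑ k, Q n i k * Q n i k :=
      Finset.single_le_sum (f := fun k => Q n i k * Q n i k)
        (fun k _ => mul_self_nonneg _) (Finset.mem_univ j)
    rw [hQsum n i] at h1
    exact abs_le_one_iff_mul_self_le_one.mpr h1
  -- bound on matrix entries of B and on eigenvalues
  have hBbd : ∀ n i j, |B n i j| ≤ |A i j| + 1 := by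
    intro n i j
    have h1 := hBclose n i j
    have h2 : (1:ℝ)/(n+1) ≤ 1 := by
      rw [div_le_one (by positivity)]
      have : (0:ℝ) ≤ n := Nat.cast_nonneg n
      linarith
    have h3 : |B n i j - A i j| < 1 := lt_of_lt_of_le (by rwa [abs_sub_comm] at h1) h2
    calc |B n i j| = |A i j + (B n i j - A i j)| := by ring_nf
      _ ≤ |A i j| + |B n i j - A i j| := abs_add_le _ _
      _ ≤ |A i j| + 1 := by linarith
  set R : ℝ := ∑ m : Fin d, ∑ i : Fin d, (|A m i| + 1) with hR
  have hdiagQ : ∀ n, Matrix.diagonal (μ n) = (Q n)ᵀ * B n * Q n := by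
    intro n
    rw [hBeq n]
    have h0 : (Q n)ᵀ * (Q n * Matrix.diagonal (μ n) * (Q n)ᵀ) * Q n
        = ((Q n)ᵀ * Q n) * Matrix.diagonal (μ n) * ((Q n)ᵀ * Q n) := by
      simp only [Matrix.mul_assoc]
    rw [h0, hQ2 n, Matrix.one_mul, Matrix.mul_one]
  have hμval : ∀ n k, μ n k = ∑ i, ∑ m, Q n m k * B n m i * Q n i k := by
    intro n k
    have h0 := congrFun (congrFun (hdiagQ n) k) k
    simp only [Matrix.diagonal_apply_eq] at h0
    rw [h0]
    simp only [Matrix.mul_apply, Matrix.transpose_apply, Finset.sum_mul]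
  have hμbd : ∀ n k, |μ n k| ≤ R := by
    intro n k
    rw [hμval n k]
    calc |∑ i, ∑ m, Q n m k * B n m i * Q n i k|
        ≤ ∑ i, |∑ m, Q n m k * B n m i * Q n i k| := Finset.abs_sum_le_sum_abs _ _
      _ ≤ ∑ i, ∑ m, |Q n m k * B n m i * Q n i k| :=
          Finset.sum_le_sum fun i _ => Finset.abs_sum_le_sum_abs _ _
      _ ≤ ∑ i, ∑ m, (|A m i| + 1) := by
          refine Finset.sum_le_sum fun i _ => Finset.sum_le_sum fun m _ => ?_
          rw [abs_mul, abs_mul]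
          have h1 := hQbd n m k
          have h2 := hQbd n i k
          have h3 := hBbd n m i
          have h4 : (0:ℝ) ≤ |B n m i| := abs_nonneg _
          have h5 : (0:ℝ) ≤ |Q n m k| := abs_nonneg _
          have h6 : (0:ℝ) ≤ |Q n i k| := abs_nonneg _
          have t1 : |Q n m k| * |B n m i| ≤ |B n m i| := mul_le_of_le_one_left h4 h1
          have t2 : |Q n m k| * |B n m i| * |Q n i k| ≤ |Q n m k| * |B n m i| :=
            mul_le_of_le_one_right (mul_nonneg h5 h4) h2
          linarith
      _ = R := by rw [hR, Finset.sum_comm]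
  -- compactness: extract a limit point along the ultrafilter
  set g : ℕ → ((Fin d → Fin d → ℝ) × (Fin d → ℝ)) := fun n => (fun i j => Q n i j, μ n) with hg
  set K : Set ((Fin d → Fin d → ℝ) × (Fin d → ℝ)) :=
    (Set.univ.pi fun _ => Set.univ.pi fun _ => Set.Icc (-1:ℝ) 1) ×ˢ
      (Set.univ.pi fun _ => Set.Icc (-R) R) with hK
  have hKcomp : IsCompact K :=
    ((isCompact_univ_pi fun _ => isCompact_univ_pi fun _ => isCompact_Icc).prod
      (isCompact_univ_pi fun _ => isCompact_Icc))
  have hgK : ∀ n, g n ∈ K := by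
    intro n
    constructor
    · intro i _
      intro j _
      exact Set.mem_Icc.mpr (abs_le.mp (hQbd n i j))
    · intro k _
      exact Set.mem_Icc.mpr (abs_le.mp (hμbd n k))
  obtain ⟨xinf, hxK, hxle⟩ := hKcomp.ultrafilter_le_nhds (U.map g)
    (by
      rw [Ultrafilter.coe_map, Filter.le_principal_iff, Filter.mem_map]
      exact Filter.univ_mem' hgK)
  have hglim : Filter.Tendsto g (U : Filter ℕ) (nhds xinf) := by
    rwa [Ultrafilter.coe_map] at hxle
  set Qinf : Matrix (Fin d) (Fin d) ℝ := Matrix.of xinf.1 with hQinf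
  set μinf : Fin d → ℝ := xinf.2 with hμinf
  have hQlim : ∀ i j, Filter.Tendsto (fun n => Q n i j) (U : Filter ℕ) (nhds (Qinf i j)) := by
    intro i j
    have h1 : Filter.Tendsto (fun n => (g n).1) (U : Filter ℕ) (nhds xinf.1) :=
      (continuous_fst.tendsto xinf).comp hglim
    exact tendsto_pi_nhds.mp (tendsto_pi_nhds.mp h1 i) j
  have hμlim : ∀ k, Filter.Tendsto (fun n => μ n k) (U : Filter ℕ) (nhds (μinf k)) := by
    intro k
    have h1 : Filter.Tendsto (fun n => (g n).2) (U : Filter ℕ) (nhds xinf.2) :=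
      (continuous_snd.tendsto xinf).comp hglim
    exact tendsto_pi_nhds.mp h1 k
  have hQTlim : ∀ i j, Filter.Tendsto (fun n => (Q n)ᵀ i j) (U : Filter ℕ)
      (nhds (Qinfᵀ i j)) := by
    intro i j
    simp only [Matrix.transpose_apply]
    exact hQlim j i
  have hdiaglim : ∀ i j, Filter.Tendsto (fun n => Matrix.diagonal (μ n) i j) (U : Filter ℕ)
      (nhds (Matrix.diagonal μinf i j)) := by
    intro i j
    rcases eq_or_ne i j with rfl | h
    · simp only [Matrix.diagonal_apply_eq]; exact hμlim i
    · simp only [Matrix.diagonal_apply_ne _ h]; exact tendsto_const_nhds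
  have hBlim : ∀ i j, Filter.Tendsto (fun n => B n i j) (U : Filter ℕ) (nhds (A i j)) := by
    intro i j
    have h0 : Filter.Tendsto (fun n : ℕ => 1/((n:ℝ)+1)) (U : Filter ℕ) (nhds 0) :=
      tendsto_one_div_add_atTop_nhds_zero_nat.mono_left hUle
    refine tendsto_iff_dist_tendsto_zero.mpr (squeeze_zero (fun n => dist_nonneg)
      (fun n => ?_) h0)
    rw [Real.dist_eq, abs_sub_comm]
    exact le_of_lt (hBclose n i j)
  have hQinf1 : Qinf * Qinfᵀ = 1 := by
    refine Stmt10Aux.lim_mul_eq hQlim hQTlim (fun i j => ?_)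
    exact Filter.Tendsto.congr (fun n => (congrFun (congrFun (hQ1 n) i) j).symm)
      tendsto_const_nhds
  have hQinf2 : Qinfᵀ * Qinf = 1 := by
    refine Stmt10Aux.lim_mul_eq hQTlim hQlim (fun i j => ?_)
    exact Filter.Tendsto.congr (fun n => (congrFun (congrFun (hQ2 n) i) j).symm)
      tendsto_const_nhds
  have hAeq : Qinf * Matrix.diagonal μinf * Qinfᵀ = A := by
    refine Stmt10Aux.lim_mul_eq (f := fun n => Q n * Matrix.diagonal (μ n))
      (g := fun n => (Q n)ᵀ) (Stmt10Aux.tendsto_entry_mul hQlim hdiaglim) hQTlim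
      (fun i j => ?_)
    exact Filter.Tendsto.congr (fun n => congrFun (congrFun (hBeq n) i) j) (hBlim i j)
  -- the limit eigenvalue vector has the same collision structure
  have hcolinf : ∀ j : Fin r, ∀ i ∈ Jinf j, ∀ i' ∈ Jinf j, μinf i = μinf i' := by
    intro j i hi i' hi'
    refine tendsto_nhds_unique (hμlim i) ?_
    refine (hμlim i').congr' ?_
    filter_upwards [hJev] with n hn
    exact hJv n j i' (by rw [hn]; exact hi') i (by rw [hn]; exact hi)
  obtain ⟨n₀, hn₀⟩ := hJev.exists
  have hJinfd : ∀ j j' : Fin r, j ≠ j' → Disjoint (Jinf j) (Jinf j') := by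
    intro j j' h
    rw [← hn₀]
    exact hJd n₀ j j' h
  have hJinfc : ∀ j, (Jinf j).card = ll j := by
    intro j
    rw [← hn₀]
    exact hJc n₀ j
  obtain ⟨T, hTcard, rep, hrepT, hrepμ⟩ :=
    Stmt10Aux.combo ll (fun j => (hll j).1) Jinf hJinfd hJinfc
  have hrepinf : ∀ i, μinf (rep i) = μinf i := hrepμ μinf hcolinf
  have himg : ∀ (ν : Fin d → ℝ), (∀ i, ν (rep i) = ν i) →
      Finset.image ν Finset.univ = Finset.image ν T := by
    intro ν hν
    apply Finset.Subset.antisymm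
    · intro x hx
      obtain ⟨i, -, rfl⟩ := Finset.mem_image.mp hx
      exact Finset.mem_image.mpr ⟨rep i, hrepT i, hν i⟩
    · exact Finset.image_subset_image (Finset.subset_univ T)
  -- spectrum of A is the range of μinf
  have hrange : spectrum ℝ A = Set.range μinf := by
    rw [← hAeq]
    set u : (Matrix (Fin d) (Fin d) ℝ)ˣ := ⟨Qinf, Qinfᵀ, hQinf1, hQinf2⟩ with hu
    have h1 : Qinf * Matrix.diagonal μinf * Qinfᵀ =
        (u : Matrix (Fin d) (Fin d) ℝ) * Matrix.diagonal μinf *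
          ((u⁻¹ : (Matrix (Fin d) (Fin d) ℝ)ˣ) : Matrix (Fin d) (Fin d) ℝ) := rfl
    rw [h1, spectrum.units_conjugate, spectrum_diagonal]
  have hlcard : (Finset.image μinf Finset.univ).card = T.card := by
    have h1 : (Set.range μinf).ncard = d + r - ∑ j, ll j := by rw [← hrange]; exact hAspec
    have h2 : Set.range μinf = ↑(Finset.image μinf Finset.univ) := by
      rw [Finset.coe_image, Finset.coe_univ, Set.image_univ]
    rw [h2, Set.ncard_coe_finset] at h1
    omega
  have hinj : Set.InjOn μinf ↑T := by
    apply Finset.injOn_of_card_image_eq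
    rw [← himg μinf hrepinf]
    exact hlcard
  have hkey : ∀ i i', μinf i = μinf i' → rep i = rep i' := by
    intro i i' h
    exact hinj (hrepT i) (hrepT i') (by rw [hrepinf i, hrepinf i', h])
  -- the fixed intertwining orthogonal matrix W
  set W : Matrix (Fin d) (Fin d) ℝ := Qinfᵀ * P with hWdef
  have hWt : Wᵀ = Pᵀ * Qinf := by
    rw [hWdef, Matrix.transpose_mul, Matrix.transpose_transpose]
  have hW1 : W * Wᵀ = 1 := by
    rw [hWt, hWdef]
    have h0 : Qinfᵀ * P * (Pᵀ * Qinf) = Qinfᵀ * (P * Pᵀ) * Qinf := by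
      simp only [Matrix.mul_assoc]
    rw [h0, hP.1, Matrix.mul_one, hQinf2]
  have hW2 : Wᵀ * W = 1 := by
    rw [hWt, hWdef]
    have h0 : Pᵀ * Qinf * (Qinfᵀ * P) = Pᵀ * (Qinf * Qinfᵀ) * P := by
      simp only [Matrix.mul_assoc]
    rw [h0, hQinf1, Matrix.mul_one, hP.2]
  have hQW : Qinf * W = P := by
    rw [hWdef, ← Matrix.mul_assoc, hQinf1, Matrix.one_mul]
  have hcommM : Matrix.diagonal μinf * W = W * Matrix.diagonal D := by
    have h1 : Matrix.diagonal μinf = Qinfᵀ * A * Qinf := by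
      rw [← hAeq]
      have h0 : Qinfᵀ * (Qinf * Matrix.diagonal μinf * Qinfᵀ) * Qinf
          = (Qinfᵀ * Qinf) * Matrix.diagonal μinf * (Qinfᵀ * Qinf) := by
        simp only [Matrix.mul_assoc]
      rw [h0, hQinf2, Matrix.one_mul, Matrix.mul_one]
    have h2 : Qinf * (Qinfᵀ * P) = P := by
      rw [← Matrix.mul_assoc, hQinf1, Matrix.one_mul]
    rw [h1, hPD, hWdef]
    simp only [Matrix.mul_assoc, h2, hP.2, Matrix.mul_one]
  have hWD : ∀ i j, W i j ≠ 0 → μinf i = D j := by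
    intro i j hWij
    have h0 := congrFun (congrFun hcommM i) j
    simp only [Matrix.diagonal_mul, Matrix.mul_diagonal] at h0
    have h1 : μinf i * W i j = D j * W i j := by rw [h0]; ring
    exact mul_right_cancel₀ hWij h1
  have hσex : ∀ j, ∃ i, W i j ≠ 0 := by
    intro j
    by_contra h
    push_neg at h
    have h0 := congrFun (congrFun hW2 j) j
    simp only [Matrix.mul_apply, Matrix.transpose_apply, Matrix.one_apply_eq] at h0
    rw [Finset.sum_eq_zero (fun i _ => by rw [h i, zero_mul])] at h0
    exact one_ne_zero h0.symm
  choose σ hσ using hσex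
  have hμσ : ∀ j, μinf (σ j) = D j := fun j => hWD _ _ (hσ j)
  have hdiagW : ∀ (ν : Fin d → ℝ), (∀ i, ν (rep i) = ν i) →
      Wᵀ * Matrix.diagonal ν * W = Matrix.diagonal (fun j => ν (σ j)) := by
    intro ν hν
    ext j j'
    have he : (Wᵀ * Matrix.diagonal ν * W) j j' = ∑ k, W k j * ν k * W k j' := by
      have h0 := Stmt10Aux.entry_conj Wᵀ ν j j'
      rw [Matrix.transpose_transpose] at h0
      simpa [Matrix.transpose_apply] using h0
    rw [he]
    have hterm : ∀ k, W k j * ν k * W k j' = ν (σ j) * (W k j * W k j') := by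
      intro k
      by_cases hk : W k j = 0
      · rw [hk]; ring
      · have h1 : μinf k = D j := hWD k j hk
        have h2 : ν k = ν (σ j) := by
          have h3 : rep k = rep (σ j) := hkey k (σ j) (by rw [h1, hμσ j])
          rw [← hν k, h3, hν (σ j)]
        rw [h2]; ring
    rw [Finset.sum_congr rfl (fun k _ => hterm k), ← Finset.mul_sum]
    have h3 : ∑ k, W k j * W k j' = (Wᵀ * W) j j' := by
      simp [Matrix.mul_apply, Matrix.transpose_apply]
    rw [h3, hW2]
    rcases eq_or_ne j j' with rfl | h
    · simp
    · simp [Matrix.one_apply_ne h, Matrix.diagonal_apply_ne _ h]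
  -- eventual facts along the ultrafilter
  have hconstν : ∀ᶠ n in (U : Filter ℕ), ∀ i, μ n (rep i) = μ n i := by
    filter_upwards [hJev] with n hn
    refine hrepμ (μ n) ?_
    intro j i hi i' hi'
    exact hJv n j i (by rw [hn]; exact hi) i' (by rw [hn]; exact hi')
  have hneq : ∀ᶠ n in (U : Filter ℕ), ∀ i i' : Fin d, μinf i ≠ μinf i' → μ n i ≠ μ n i' := by
    rw [Filter.eventually_all]
    intro i
    rw [Filter.eventually_all]
    intro i'
    by_cases h : μinf i = μinf i'
    · filter_upwards with n
      exact fun hc => absurd h hc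
    · have ht : Filter.Tendsto (fun n => μ n i - μ n i') (U : Filter ℕ)
        (nhds (μinf i - μinf i')) := (hμlim i).sub (hμlim i')
      filter_upwards [ht.eventually_ne (sub_ne_zero.mpr h)] with n hn
      exact fun _ => sub_ne_zero.mp hn
  have hFev : ∀ᶠ n in (U : Filter ℕ), ∀ j : Fin d, |D j - μ n (σ j)| < ε := by
    rw [Filter.eventually_all]
    intro j
    have ht : Filter.Tendsto (fun n => μ n (σ j)) (U : Filter ℕ) (nhds (D j)) := by
      rw [← hμσ j]; exact hμlim (σ j)
    filter_upwards [Metric.tendsto_nhds.mp ht ε hε] with n hn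
    rw [Real.dist_eq] at hn
    rw [abs_sub_comm]
    exact hn
  have hQev : ∀ᶠ n in (U : Filter ℕ), ∀ i j : Fin d, |(Q n * W) i j - P i j| < ε := by
    rw [Filter.eventually_all]
    intro i
    rw [Filter.eventually_all]
    intro j
    have ht : Filter.Tendsto (fun n => (Q n * W) i j) (U : Filter ℕ) (nhds (P i j)) := by
      have h0 := Stmt10Aux.tendsto_entry_mul (g := fun _ => W) (G := W) hQlim
        (fun i j => tendsto_const_nhds) i j
      rwa [hQW] at h0
    filter_upwards [Metric.tendsto_nhds.mp ht ε hε] with n hn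
    rw [Real.dist_eq] at hn
    exact hn
  -- pick a single good index and derive the contradiction
  obtain ⟨n, hcn, hnen, hFn, hQn⟩ := (hconstν.and (hneq.and (hFev.and hQev))).exists
  refine hBbad n ⟨?_, ?_⟩
  · -- the number of distinct eigenvalues of B n
    have hspecB : spectrum ℝ (B n) = Set.range (μ n) := by
      rw [hBeq n]
      set u : (Matrix (Fin d) (Fin d) ℝ)ˣ := ⟨Q n, (Q n)ᵀ, hQ1 n, hQ2 n⟩ with hu
      have h1 : Q n * Matrix.diagonal (μ n) * (Q n)ᵀ =
          (u : Matrix (Fin d) (Fin d) ℝ) * Matrix.diagonal (μ n) *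
            ((u⁻¹ : (Matrix (Fin d) (Fin d) ℝ)ˣ) : Matrix (Fin d) (Fin d) ℝ) := rfl
      rw [h1, spectrum.units_conjugate, spectrum_diagonal]
    rw [hspecB]
    have h1 : Set.range (μ n) = ↑(Finset.image (μ n) Finset.univ) := by
      rw [Finset.coe_image, Finset.coe_univ, Set.image_univ]
    rw [h1, Set.ncard_coe_finset, himg (μ n) hcn]
    have hinjn : Set.InjOn (μ n) ↑T := by
      intro a ha b hb hab
      by_contra hne'
      have hμne : μinf a ≠ μinf b := fun hEq => hne' (hinj ha hb hEq)
      exact (hnen a b hμne) hab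
    rw [Finset.card_image_of_injOn hinjn]
    omega
  · -- the nearby spectral decomposition
    refine ⟨Q n * W, fun j => μ n (σ j), ?_, ?_, ?_, hFn, hQn⟩
    · rw [Matrix.transpose_mul]
      have h0 : Q n * W * (Wᵀ * (Q n)ᵀ) = Q n * (W * Wᵀ) * (Q n)ᵀ := by
        simp only [Matrix.mul_assoc]
      rw [h0, hW1, Matrix.mul_one, hQ1 n]
    · rw [Matrix.transpose_mul]
      have h0 : Wᵀ * (Q n)ᵀ * (Q n * W) = Wᵀ * ((Q n)ᵀ * Q n) * W := by
        simp only [Matrix.mul_assoc]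
      rw [h0, hQ2 n, Matrix.mul_one, hW2]
    · rw [← hdiagW (μ n) hcn, Matrix.transpose_mul (Q n) W, hBeq n]
      have h0 : Q n * W * (Wᵀ * Matrix.diagonal (μ n) * W) * (Wᵀ * (Q n)ᵀ)
          = Q n * ((W * Wᵀ) * Matrix.diagonal (μ n) * (W * Wᵀ)) * (Q n)ᵀ := by
        simp only [Matrix.mul_assoc]
      rw [h0, hW1, Matrix.one_mul, Matrix.mul_one]


end
end

section
/- Let A ∈ H(d; l_1,…,l_r) have exactly l distinct eigenvalues and a spectral decomposition A = P D P* with P a d×d unitary matrix and D a d×d real diagonal matrix. Then for every ε > 0 there exists δ > 0 such that every B ∈ H(d; l_1,…,l_r) with max_{1≤i,j≤d} |A_{i,j} − B_{i,j}| < δ has exactly l distinct eigenvalues and admits a spectral decomposition B = Q F Q* with Q a d×d unitary matrix and F a d×d real diagonal matrix satisfying max_{1≤i≤d} |D_{i,i} − F_{i,i}| < ε and max_{1≤i,j≤d} |Q_{i,j} − P_{i,j}| < ε. -/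
/-!
Suppose the claim fails for some `ε`: then there are `B_k → A` in `H(d; l_1, …, l_r)`, say
`B_k = Q_k diag(μ_k) Q_kᴴ`, none of which satisfies the conclusion. The unitary group is compact,
so along a subsequence `Q_k → Ql`; then `diag(μ_k) = Q_kᴴ B_k Q_k` gives `μ_k → μl` with
`A = Ql diag(μl) Qlᴴ`. For large `k`, `μ_k` separates every pair of indices that `μl` separates,
while the collisions leave `μ_k` at most `l` distinct values, exactly as many as `μl`; so `μ_k`
and `μl` have the same coincidences. The unitary `U = Pᴴ Ql` intertwines `diag(μl)` and `diag(D)`,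
so it only mixes indices on which `μl` is constant. Hence `D = μl ∘ σ` for some `σ`, and
`Q_k Uᴴ` diagonalises `B_k` with eigenvalues `μ_k ∘ σ`; these converge to `P` and `D`.
-/

open Matrix Finset

noncomputable section

/-- `H(d; l_1, …, l_r)` : complex Hermitian `d × d` matrices having, for each `j`, `l_j`
(real) eigenvalues (with multiplicity) which coincide, over pairwise disjoint index sets. -/
def HermCollide (d r : ℕ) (ll : Fin r → ℕ) : Set (Matrix (Fin d) (Fin d) ℂ) :=
  {x | ∃ (μ : Fin d → ℝ) (P : Matrix (Fin d) (Fin d) ℂ),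
    P * Pᴴ = 1 ∧ Pᴴ * P = 1 ∧
    x = P * Matrix.diagonal (fun i => ((μ i : ℝ) : ℂ)) * Pᴴ ∧ hasCollision ll μ}

open Filter Topology

instance Matrix.instFirstCountableTopology {m n 𝕜 : Type*} [Finite m] [Finite n]
    [TopologicalSpace 𝕜] [FirstCountableTopology 𝕜] : FirstCountableTopology (Matrix m n 𝕜) :=
  inferInstanceAs (FirstCountableTopology (m → n → 𝕜))

theorem Matrix.exists_pos_forall_norm_sub_lt_of_forall_seq {m n 𝕜 : Type*} [Fintype m]
    [Fintype n] [NormedAddCommGroup 𝕜] {S : Set (Matrix m n 𝕜)} {p : Matrix m n 𝕜 → Prop}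
    {A : Matrix m n 𝕜}
    (h : ∀ B : ℕ → Matrix m n 𝕜, (∀ k, B k ∈ S) → Tendsto B atTop (𝓝 A) → ∃ k, p (B k)) :
    ∃ δ > 0, ∀ B ∈ S, (∀ i j, ‖A i j - B i j‖ < δ) → p B := by
  have hev : ∀ᶠ B in 𝓝 A, B ∈ S → p B := by
    by_contra hne
    obtain ⟨B, hBA, hB⟩ := exists_seq_forall_of_frequently (not_eventually.1 hne)
    simp only [Classical.not_imp] at hB
    obtain ⟨k, hk⟩ := h B (fun k => (hB k).1) hBA
    exact (hB k).2 hk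
  open scoped Matrix.Norms.Elementwise in
  obtain ⟨δ, hδ, hball⟩ := Metric.eventually_nhds_iff.1 hev
  exact ⟨δ, hδ, fun B hB hAB => hball (by rwa [dist_comm, dist_eq_norm, norm_lt_iff hδ]) hB⟩

theorem Filter.Tendsto.eventually_forall_dist_lt {γ ι E : Type*} [Finite ι] [PseudoMetricSpace E]
    {l : Filter γ} {f : γ → ι → E} {x : ι → E} (h : Tendsto f l (𝓝 x)) {ε : ℝ} (hε : 0 < ε) :
    ∀ᶠ k in l, ∀ i, dist (f k i) (x i) < ε :=
  eventually_all.2 fun i => Metric.tendsto_nhds.1 (tendsto_pi_nhds.1 h i) ε hε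

theorem Filter.Tendsto.eventually_eq_imp_eq {γ ι X : Type*} [Finite ι] [TopologicalSpace X]
    [T2Space X] {l : Filter γ} {μ : γ → ι → X} {μl : ι → X} (h : Tendsto μ l (𝓝 μl)) :
    ∀ᶠ k in l, ∀ b b', μ k b = μ k b' → μl b = μl b' := by
  simp only [eventually_all]
  intro b b'
  by_cases hb : μl b = μl b'
  · exact Eventually.of_forall fun _ _ => hb
  · exact (((tendsto_pi_nhds.1 h b).prodMk_nhds (tendsto_pi_nhds.1 h b')).eventually
      ((isOpen_ne_fun continuous_fst continuous_snd).mem_nhds hb)).mono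
        fun _ hk heq => (hk heq).elim

section ValuePattern

variable {ι α β : Type*} [Fintype ι] [DecidableEq α] [DecidableEq β] {f : ι → α} {g : ι → β}

theorem card_image_pair_eq_card_image (h : ∀ i j, f i = f j → g i = g j) :
    #(univ.image fun i => (f i, g i)) = #(univ.image f) := by
  rw [show univ.image f = (univ.image fun i => (f i, g i)).image Prod.fst by
    rw [image_image]; rfl, card_image_of_injOn (f := Prod.fst)]
  rintro _ hx _ hy hxy
  obtain ⟨i, -, rfl⟩ := mem_image.1 hx
  obtain ⟨j, -, rfl⟩ := mem_image.1 hy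
  exact Prod.ext hxy (h i j hxy)

theorem image_snd_image_pair : (univ.image fun i => (f i, g i)).image Prod.snd = univ.image g := by
  rw [image_image]; rfl

theorem card_image_le_of_eq_imp_eq (h : ∀ i j, f i = f j → g i = g j) :
    #(univ.image g) ≤ #(univ.image f) := by
  rw [← card_image_pair_eq_card_image h, ← image_snd_image_pair (f := f) (g := g)]
  exact card_image_le

theorem eq_imp_eq_of_card_image_le (h : ∀ i j, f i = f j → g i = g j)
    (hcard : #(univ.image f) ≤ #(univ.image g)) (i j : ι) (hg : g i = g j) : f i = f j := by
  rw [← card_image_pair_eq_card_image h, ← image_snd_image_pair (f := f) (g := g)] at hcard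
  have hinj := injOn_of_card_image_eq (le_antisymm card_image_le hcard)
  exact congrArg Prod.fst
    (hinj (mem_image_of_mem _ (mem_univ i)) (mem_image_of_mem _ (mem_univ j)) hg)

end ValuePattern

theorem hasCollision.card_image_add_sum_le {d r : ℕ} {ll : Fin r → ℕ} {μ : Fin d → ℝ}
    (h : hasCollision ll μ) : #(univ.image μ) + ∑ j, ll j ≤ d + r := by
  classical
  obtain ⟨J, hdisj, hcard, hconst⟩ := h
  set T := univ.biUnion J
  have hT : #T = ∑ j, ll j := by
    rw [card_biUnion fun j _ j' _ hjj' => hdisj j j' hjj']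
    simp [hcard]
  have hJ : ∀ j, #((J j).image μ) ≤ 1 := fun j => card_le_one.2 fun x hx y hy => by
    obtain ⟨i, hi, rfl⟩ := mem_image.1 hx
    obtain ⟨i', hi', rfl⟩ := mem_image.1 hy
    exact hconst j i hi i' hi'
  have hsplit : univ.image μ = (univ.biUnion fun j => (J j).image μ) ∪ Tᶜ.image μ := by
    rw [← biUnion_image, ← image_union, union_compl]
  have hbound : #(univ.image μ) ≤ r + #Tᶜ := by
    rw [hsplit]
    refine (card_union_le _ _).trans (add_le_add (card_biUnion_le.trans ?_) card_image_le)
    simpa using sum_le_sum fun j (_ : j ∈ univ) => hJ j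
  have hTd : #T ≤ d := by simpa using card_le_univ T
  rw [card_compl, Fintype.card_fin] at hbound
  omega

namespace Matrix

variable {n 𝕜 : Type*} [Fintype n] [DecidableEq n] [RCLike 𝕜]

theorem isCompact_unitaryGroup : IsCompact (unitaryGroup n 𝕜 : Set (Matrix n n 𝕜)) := by
  have hbox : IsCompact {U : Matrix n n 𝕜 | ∀ i j, U i j ∈ Metric.closedBall (0 : 𝕜) 1} := by
    have := isCompact_univ_pi fun _ : n => isCompact_univ_pi fun _ : n =>
      isCompact_closedBall (0 : 𝕜) 1
    simp only [Set.pi, Set.mem_univ, true_implies, Set.mem_ofPred_eq] at this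
    exact this
  refine hbox.of_isClosed_subset isClosed_unitary fun U hU i j => ?_
  simpa using entry_norm_bound_of_unitary hU i j

theorem ncard_spectrum_conj_diagonal {U : Matrix n n 𝕜} (hU : U ∈ unitaryGroup n 𝕜)
    (μ : n → ℝ) :
    (spectrum 𝕜 (U * diagonal (fun i => (μ i : 𝕜)) * Uᴴ)).ncard = #(univ.image μ) := by
  rw [← Set.ncard_coe_finset, coe_image, coe_univ, Set.image_univ,
    ← Set.ncard_image_of_injective _ (RCLike.ofReal_injective (K := 𝕜)), ← Set.range_comp]
  exact congrArg Set.ncard ((Unitary.spectrum_star_right_conjugate (U := ⟨U, hU⟩)).trans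
    (spectrum_diagonal _))

theorem exists_subseq_tendsto_unitary_diagonal {A : Matrix n n 𝕜} {B Q : ℕ → Matrix n n 𝕜}
    {μ : ℕ → n → ℝ} (hQ : ∀ k, Q k ∈ unitaryGroup n 𝕜)
    (hB : ∀ k, B k = Q k * diagonal (fun i => (μ k i : 𝕜)) * (Q k)ᴴ)
    (hBA : Tendsto B atTop (𝓝 A)) :
    ∃ φ : ℕ → ℕ, ∃ Ql ∈ unitaryGroup n 𝕜, ∃ μl : n → ℝ,
      Tendsto (Q ∘ φ) atTop (𝓝 Ql) ∧ Tendsto (μ ∘ φ) atTop (𝓝 μl) ∧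
      A = Ql * diagonal (fun i => (μl i : 𝕜)) * Qlᴴ := by
  obtain ⟨Ql, hQl, φ, hφ, hQφ⟩ := isCompact_unitaryGroup.tendsto_subseq hQ
  have hBφ : Tendsto (B ∘ φ) atTop (𝓝 A) := hBA.comp hφ.tendsto_atTop
  have hdiag : ∀ k, diagonal (fun i => (μ k i : 𝕜)) = (Q k)ᴴ * B k * Q k := fun k => by
    have hQQ : (Q k)ᴴ * Q k = 1 := Unitary.star_mul_self_of_mem (hQ k)
    rw [hB, mul_assoc, mul_assoc, hQQ, mul_one, ← mul_assoc, hQQ, one_mul]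
  set μl : n → ℝ := fun i => RCLike.re ((Qlᴴ * A * Ql) i i)
  have hμφ : Tendsto (μ ∘ φ) atTop (𝓝 μl) := by
    refine tendsto_pi_nhds.2 fun i => ?_
    have hconj : Tendsto (fun k => (Q (φ k))ᴴ * B (φ k) * Q (φ k)) atTop (𝓝 (Qlᴴ * A * Ql)) :=
      (hQφ.star.mul hBφ).mul hQφ
    have hre : Continuous fun M : Matrix n n 𝕜 => RCLike.re (M i i) := by fun_prop
    refine ((hre.tendsto _).comp hconj).congr fun k => ?_
    simp only [← hdiag, Function.comp_apply, diagonal_apply_eq, RCLike.ofReal_re]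
  refine ⟨φ, Ql, hQl, μl, hQφ, hμφ, tendsto_nhds_unique hBφ ?_⟩
  have hD : Tendsto (fun k => diagonal fun i => (μ (φ k) i : 𝕜)) atTop
      (𝓝 (diagonal fun i => (μl i : 𝕜))) := by
    have hcont : Continuous fun v : n → ℝ => diagonal fun i => (v i : 𝕜) := by fun_prop
    exact (hcont.tendsto μl).comp hμφ
  exact ((hQφ.mul hD).mul hQφ.star).congr fun k => (hB (φ k)).symm

theorem eq_of_mul_diagonal_eq_diagonal_mul {U : Matrix n n 𝕜} {μ D : n → ℝ}
    (h : U * diagonal (fun i => (μ i : 𝕜)) = diagonal (fun i => (D i : 𝕜)) * U) {a c : n}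
    (hac : U a c ≠ 0) : D a = μ c := by
  have hentry := congrFun (congrFun h a) c
  rw [mul_diagonal, diagonal_mul, mul_comm] at hentry
  exact_mod_cast (mul_right_cancel₀ hac hentry).symm

theorem diagonal_comp_mul_eq_mul_diagonal {U : Matrix n n 𝕜} {μ D : n → ℝ}
    (h : U * diagonal (fun i => (μ i : 𝕜)) = diagonal (fun i => (D i : 𝕜)) * U) {σ : n → n}
    (hσ : ∀ a, U a (σ a) ≠ 0) {ν : n → ℝ} (hν : ∀ b b', μ b = μ b' → ν b = ν b') :
    diagonal (fun i => (ν (σ i) : 𝕜)) * U = U * diagonal (fun i => (ν i : 𝕜)) := by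
  ext a c
  rw [diagonal_mul, mul_diagonal]
  by_cases hac : U a c = 0
  · simp [hac]
  · rw [hν _ _ ((eq_of_mul_diagonal_eq_diagonal_mul h (hσ a)).symm.trans
      (eq_of_mul_diagonal_eq_diagonal_mul h hac)), mul_comm]

theorem exists_apply_ne_zero_of_mem_unitaryGroup {U : Matrix n n 𝕜} (hU : U ∈ unitaryGroup n 𝕜)
    (a : n) : ∃ c, U a c ≠ 0 := by
  by_contra! hrow
  have hdiag : (U * Uᴴ) a a = 0 := by simp [mul_apply, hrow]
  rw [show U * Uᴴ = 1 from Unitary.mul_star_self_of_mem hU, one_apply_eq] at hdiag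
  exact one_ne_zero hdiag

theorem mul_diagonal_eq_diagonal_mul_of_conj_eq {P Q : Matrix n n 𝕜} (hP : P ∈ unitaryGroup n 𝕜)
    (hQ : Q ∈ unitaryGroup n 𝕜) {D μ : n → ℝ}
    (h : P * diagonal (fun i => (D i : 𝕜)) * Pᴴ = Q * diagonal (fun i => (μ i : 𝕜)) * Qᴴ) :
    Pᴴ * Q * diagonal (fun i => (μ i : 𝕜)) = diagonal (fun i => (D i : 𝕜)) * (Pᴴ * Q) := by
  have hPP : Pᴴ * P = 1 := Unitary.star_mul_self_of_mem hP
  have hQQ : Qᴴ * Q = 1 := Unitary.star_mul_self_of_mem hQ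
  calc Pᴴ * Q * diagonal (fun i => (μ i : 𝕜))
      = Pᴴ * (Q * diagonal (fun i => (μ i : 𝕜)) * Qᴴ) * Q := by
        simp only [mul_assoc, hQQ, mul_one]
    _ = Pᴴ * (P * diagonal (fun i => (D i : 𝕜)) * Pᴴ) * Q := by rw [h]
    _ = diagonal (fun i => (D i : 𝕜)) * (Pᴴ * Q) := by
        simp only [← mul_assoc, hPP, one_mul]

theorem exists_reindex_of_mul_diagonal_eq_diagonal_mul {U : Matrix n n 𝕜}
    (hU : U ∈ unitaryGroup n 𝕜) {D μ : n → ℝ}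
    (h : U * diagonal (fun i => (μ i : 𝕜)) = diagonal (fun i => (D i : 𝕜)) * U) :
    ∃ σ : n → n, D = μ ∘ σ ∧ ∀ (Q : Matrix n n 𝕜) (ν : n → ℝ),
      (∀ b b', μ b = μ b' → ν b = ν b') →
      Q * diagonal (fun i => (ν i : 𝕜)) * Qᴴ =
        Q * Uᴴ * diagonal (fun i => (ν (σ i) : 𝕜)) * (Q * Uᴴ)ᴴ := by
  have hUU : Uᴴ * U = 1 := Unitary.star_mul_self_of_mem hU
  choose σ hσ using exists_apply_ne_zero_of_mem_unitaryGroup hU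
  refine ⟨σ, funext fun a => eq_of_mul_diagonal_eq_diagonal_mul h (hσ a), fun Q ν hν => ?_⟩
  rw [conjTranspose_mul, conjTranspose_conjTranspose, mul_assoc (Q * Uᴴ), ← mul_assoc _ U,
    diagonal_comp_mul_eq_mul_diagonal h hσ hν]
  simp only [mul_assoc, ← mul_assoc Uᴴ U, hUU, one_mul]

theorem exists_tendsto_unitary_diagonalization {P Ql : Matrix n n 𝕜}
    (hP : P ∈ unitaryGroup n 𝕜) (hQl : Ql ∈ unitaryGroup n 𝕜) {D μl : n → ℝ}
    (hPQl : P * diagonal (fun i => (D i : 𝕜)) * Pᴴ = Ql * diagonal (fun i => (μl i : 𝕜)) * Qlᴴ)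
    {γ : Type*} {l : Filter γ} {Q : γ → Matrix n n 𝕜} {μ : γ → n → ℝ}
    (hQ : ∀ k, Q k ∈ unitaryGroup n 𝕜) (hQQl : Tendsto Q l (𝓝 Ql)) (hμμl : Tendsto μ l (𝓝 μl))
    (hcard : ∀ k, #(univ.image (μ k)) ≤ #(univ.image μl)) :
    ∃ (Q' : γ → Matrix n n 𝕜) (F : γ → n → ℝ), (∀ k, Q' k ∈ unitaryGroup n 𝕜) ∧
      Tendsto Q' l (𝓝 P) ∧ Tendsto F l (𝓝 D) ∧
      ∀ᶠ k in l, #(univ.image (μ k)) = #(univ.image μl) ∧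
        Q k * diagonal (fun i => (μ k i : 𝕜)) * (Q k)ᴴ =
          Q' k * diagonal (fun i => (F k i : 𝕜)) * (Q' k)ᴴ := by
  have hU : Pᴴ * Ql ∈ unitaryGroup n 𝕜 := mul_mem (Unitary.star_mem hP) hQl
  obtain ⟨σ, hDσ, hconj⟩ := exists_reindex_of_mul_diagonal_eq_diagonal_mul hU
    (mul_diagonal_eq_diagonal_mul_of_conj_eq hP hQl hPQl)
  have hlim : Ql * (Pᴴ * Ql)ᴴ = P := by
    rw [conjTranspose_mul, conjTranspose_conjTranspose, ← mul_assoc,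
      show Ql * Qlᴴ = 1 from Unitary.mul_star_self_of_mem hQl, one_mul]
  have hQ'P : Tendsto (fun k => Q k * (Pᴴ * Ql)ᴴ) l (𝓝 P) := by
    simpa only [hlim] using hQQl.mul_const (Pᴴ * Ql)ᴴ
  refine ⟨fun k => Q k * (Pᴴ * Ql)ᴴ, fun k i => μ k (σ i),
    fun k => mul_mem (hQ k) (Unitary.star_mem hU), hQ'P, ?_, ?_⟩
  · rw [hDσ]
    exact tendsto_pi_nhds.2 fun i => tendsto_pi_nhds.1 hμμl (σ i)
  · filter_upwards [hμμl.eventually_eq_imp_eq] with k hpat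
    exact ⟨le_antisymm (hcard k) (card_image_le_of_eq_imp_eq hpat),
      hconj _ _ (eq_imp_eq_of_card_image_le hpat (hcard k))⟩

end Matrix

theorem stmt13_general (d r : ℕ) (ll : Fin r → ℕ)
    (A : Matrix (Fin d) (Fin d) ℂ)
    (P : Matrix (Fin d) (Fin d) ℂ) (D : Fin d → ℝ)
    (hP : P * Pᴴ = 1 ∧ Pᴴ * P = 1)
    (hPD : A = P * Matrix.diagonal (fun i => ((D i : ℝ) : ℂ)) * Pᴴ)
    (hAspec : (spectrum ℂ A).ncard = d + r - ∑ j, ll j)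
    (ε : ℝ) (hε : 0 < ε) :
    ∃ δ > (0 : ℝ), ∀ B ∈ HermCollide d r ll,
      (∀ i j : Fin d, ‖A i j - B i j‖ < δ) →
      (spectrum ℂ B).ncard = d + r - ∑ j, ll j ∧
      ∃ (Q : Matrix (Fin d) (Fin d) ℂ) (F : Fin d → ℝ),
        Q * Qᴴ = 1 ∧ Qᴴ * Q = 1 ∧
        B = Q * Matrix.diagonal (fun i => ((F i : ℝ) : ℂ)) * Qᴴ ∧
        (∀ i : Fin d, |D i - F i| < ε) ∧ (∀ i j : Fin d, ‖Q i j - P i j‖ < ε) := by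
  have hPu : P ∈ unitaryGroup (Fin d) ℂ := Unitary.mem_iff.2 ⟨hP.2, hP.1⟩
  apply exists_pos_forall_norm_sub_lt_of_forall_seq
  intro B hBS hBA
  choose μ Q hQ₁ hQ₂ hBQ hcoll using hBS
  have hQ : ∀ k, Q k ∈ unitaryGroup (Fin d) ℂ := fun k => Unitary.mem_iff.2 ⟨hQ₂ k, hQ₁ k⟩
  obtain ⟨φ, Ql, hQl, μl, hQφ, hμφ, hAl⟩ := exists_subseq_tendsto_unitary_diagonal hQ hBQ hBA
  rw [hPD] at hAl
  have hcardl : #(univ.image μl) = d + r - ∑ j, ll j := by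
    rw [← hAspec, hPD, ← ncard_spectrum_conj_diagonal hQl, ← hAl]
  obtain ⟨Q', F, hQ', hQ'P, hFD, hev⟩ := exists_tendsto_unitary_diagonalization hPu hQl hAl
    (fun k => hQ (φ k)) hQφ hμφ fun k => by
      have := (hcoll (φ k)).card_image_add_sum_le
      rw [Function.comp_apply]
      omega
  obtain ⟨k, ⟨hcardk, hBk⟩, hFclose, hQclose⟩ := (hev.and ((hFD.eventually_forall_dist_lt hε).and
    (eventually_all.2 fun i => (tendsto_pi_nhds.1 hQ'P i).eventually_forall_dist_lt hε))).exists
  refine ⟨φ k, ?_, Q' k, F k, Unitary.mul_star_self_of_mem (hQ' k),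
    Unitary.star_mul_self_of_mem (hQ' k), (hBQ _).trans hBk,
    fun i => by rw [abs_sub_comm]; exact hFclose i,
    fun i j => by rw [← dist_eq_norm]; exact hQclose i j⟩
  rw [hBQ, ← hcardl, ← hcardk]
  exact ncard_spectrum_conj_diagonal (hQ _) _

/-- continuity of the spectral decomposition on `H(d; l_1, …, l_r)` near a
matrix `A` with exactly `l = d - ∑_j (l_j - 1)` distinct eigenvalues. -/
theorem stmt13 (d r : ℕ) (hd : 2 ≤ d) (hr : 1 ≤ r) (ll : Fin r → ℕ)
    (hll : ∀ j, 2 ≤ ll j ∧ ll j ≤ d) (hsum : ∑ j, ll j ≤ d)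
    (A : Matrix (Fin d) (Fin d) ℂ) (hA : A ∈ HermCollide d r ll)
    (P : Matrix (Fin d) (Fin d) ℂ) (D : Fin d → ℝ)
    (hP : P * Pᴴ = 1 ∧ Pᴴ * P = 1)
    (hPD : A = P * Matrix.diagonal (fun i => ((D i : ℝ) : ℂ)) * Pᴴ)
    (hAspec : (spectrum ℂ A).ncard = d + r - ∑ j, ll j)
    (ε : ℝ) (hε : 0 < ε) :
    ∃ δ > (0 : ℝ), ∀ B ∈ HermCollide d r ll,
      (∀ i j : Fin d, ‖A i j - B i j‖ < δ) →
      (spectrum ℂ B).ncard = d + r - ∑ j, ll j ∧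
      ∃ (Q : Matrix (Fin d) (Fin d) ℂ) (F : Fin d → ℝ),
        Q * Qᴴ = 1 ∧ Qᴴ * Q = 1 ∧
        B = Q * Matrix.diagonal (fun i => ((F i : ℝ) : ℂ)) * Qᴴ ∧
        (∀ i : Fin d, |D i - F i| < ε) ∧ (∀ i j : Fin d, ‖Q i j - P i j‖ < ε) :=
  stmt13_general d r ll A P D hP hPD hAspec ε hε

end
end

section
/- Let A ∈ M_ℝ(d_1×d_2; l_1,…,l_r) have a singular value decomposition A = P_L D P_Rᵀ with P_L a d_1×d_1 orthogonal matrix, P_R a d_2×d_2 orthogonal matrix and D a d_1×d_2 diagonal matrix, and assume 0 is not an eigenvalue of A Aᵀ and A Aᵀ has exactly l distinct eigenvalues. Then for every ε > 0 there exists δ > 0 such that every B ∈ M_ℝ(d_1×d_2; l_1,…,l_r) with max_{i,j} |A_{i,j} − B_{i,j}| < δ satisfies: 0 is not an eigenvalue of B Bᵀ, B Bᵀ has exactly l distinct eigenvalues, and B admits a singular value decomposition B = Q_L F Q_Rᵀ with Q_L orthogonal d_1×d_1, Q_R orthogonal d_2×d_2 and F diagonal d_1×d_2 satisfying max_{1≤i≤d_1}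 |D_{i,i} − F_{i,i}| < ε, max_{1≤i,j≤d_1} |(Q_L)_{i,j} − (P_L)_{i,j}| < ε, and max_{1≤i,j≤d_2} |(Q_R)_{i,j} − (P_R)_{i,j}| < ε. -/
/-!
Suppose the claim fails for some `ε`; then there are `B k → A` in the collision set without a
good decomposition. Since the orthogonal group is compact, after passing to a subsequence the
orthogonal matrices `Q k` diagonalizing `B k Bᵀ k` converge, and with them the singular values
`t k`, to a diagonalization `Q₀ diag(f²) Q₀ᵀ` of `A Aᵀ`. Distinct values of `f` stay apart near
the limit, and the collision condition allows `t k` no more distinct values than `f` has, so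
eventually `t k` has exactly the level sets of `f`. The matrix `Q₀ᵀ PL` intertwines `diag(f²)`
with the diagonal of `D Dᵀ`, hence also `diag(t k²)` with a diagonal matrix, so `Q k Q₀ᵀ PL → PL`
still diagonalizes `B k Bᵀ k`. The right factor `Bᵀ QL F⁻¹` has orthonormal columns converging to
the first columns of `PR`; completed to orthogonal matrices it converges along a further
subsequence to some `U₀`, and multiplying by the fixed matrix `U₀ᵀ PR`, which fixes those columns,
makes the completions converge to `PR`.
-/

open Matrix Finset

noncomputable section

/-- `M_ℝ(d₁ × d₂; l_1, …, l_r)` : real `d₁ × d₂` matrices having, for each `j`, `l_j`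
singular values (with multiplicity) which coincide, over pairwise disjoint index sets. -/
def RectRealCollide (d₁ d₂ r : ℕ) (ll : Fin r → ℕ) : Set (Matrix (Fin d₁) (Fin d₂) ℝ) :=
  {x | ∃ s : Fin d₁ → ℝ, (∀ i, 0 ≤ s i) ∧
    (∃ P : Matrix (Fin d₁) (Fin d₁) ℝ, P * Pᵀ = 1 ∧ Pᵀ * P = 1 ∧
      x * xᵀ = P * Matrix.diagonal (fun i => s i ^ 2) * Pᵀ) ∧
    hasCollision ll s}

open Filter Topology

section LevelSets

variable {ι α β : Type*}

theorem ncard_range_eq_of_forall_eq_iff {u : ι → α} {v : ι → β}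
    (h : ∀ i j, u i = u j ↔ v i = v j) : (Set.range u).ncard = (Set.range v).ncard := by
  set p : ι → α × β := fun i => (u i, v i)
  have hfst : Set.InjOn Prod.fst (Set.range p) := by
    rintro _ ⟨i, rfl⟩ _ ⟨j, rfl⟩ hij
    exact Prod.ext hij ((h i j).1 hij)
  have hsnd : Set.InjOn Prod.snd (Set.range p) := by
    rintro _ ⟨i, rfl⟩ _ ⟨j, rfl⟩ hij
    exact Prod.ext ((h i j).2 hij) hij
  calc (Set.range u).ncard = (Prod.fst '' Set.range p).ncard := by rw [← Set.range_comp]; rfl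
    _ = (Set.range p).ncard := hfst.ncard_image
    _ = (Prod.snd '' Set.range p).ncard := hsnd.ncard_image.symm
    _ = (Set.range v).ncard := by rw [← Set.range_comp]; rfl

theorem ncard_range_sq_eq {u : ι → ℝ} {v : ι → β} (hu : ∀ i, 0 ≤ u i)
    (h : ∀ i j, u i = u j ↔ v i = v j) :
    (Set.range fun i => u i ^ 2).ncard = (Set.range v).ncard :=
  ncard_range_eq_of_forall_eq_iff fun i j => by
    rw [pow_left_inj₀ (hu i) (hu j) two_ne_zero, h]

theorem forall_eq_iff_of_ncard_range_le [Finite ι] {u : ι → α} {v : ι → β}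
    (hvu : ∀ i j, u i = u j → v i = v j) (hcard : (Set.range u).ncard ≤ (Set.range v).ncard) :
    ∀ i j, u i = u j ↔ v i = v j := by
  set p : ι → α × β := fun i => (u i, v i)
  have hfst : Set.InjOn Prod.fst (Set.range p) := by
    rintro _ ⟨i, rfl⟩ _ ⟨j, rfl⟩ hij
    exact Prod.ext hij (hvu i j hij)
  have hsnd : Set.InjOn Prod.snd (Set.range p) := by
    refine (Set.ncard_image_iff (Set.finite_range p)).1
      (le_antisymm (Set.ncard_image_le (Set.finite_range p)) ?_)
    calc (Set.range p).ncard = (Set.range u).ncard := by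
          rw [← hfst.ncard_image, ← Set.range_comp]; rfl
      _ ≤ (Set.range v).ncard := hcard
      _ = (Prod.snd '' Set.range p).ncard := by rw [← Set.range_comp]; rfl
  exact fun i j => ⟨hvu i j, fun h =>
    congrArg Prod.fst (hsnd (Set.mem_range_self i) (Set.mem_range_self j) h)⟩

theorem eventually_forall_eq_iff_of_tendsto {γ : Type*} [Finite ι] [TopologicalSpace α]
    [T2Space α] {l : Filter γ} {t : γ → ι → α} {f : ι → α} (ht : Tendsto t l (𝓝 f))
    (hcard : ∀ k, (Set.range (t k)).ncard ≤ (Set.range f).ncard) :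
    ∀ᶠ k in l, ∀ i j, t k i = t k j ↔ f i = f j := by
  have hsep : ∀ i j, ∀ᶠ k in l, t k i = t k j → f i = f j := fun i j => by
    by_cases hij : f i = f j
    · exact Eventually.of_forall fun _ _ => hij
    · have := ((tendsto_pi_nhds.1 ht i).prodMk_nhds (tendsto_pi_nhds.1 ht j)).eventually
        (isClosed_diagonal.isOpen_compl.mem_nhds hij)
      exact this.mono fun k hk h => absurd h hk
  filter_upwards [eventually_all.2 fun i => eventually_all.2 (hsep i)] with k hk
  exact forall_eq_iff_of_ncard_range_le hk (hcard k)

end LevelSets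

theorem hasCollision.ncard_range_add_sum_le {d r : ℕ} {ll : Fin r → ℕ} {t : Fin d → ℝ}
    (h : hasCollision ll t) : (Set.range t).ncard + ∑ j, ll j ≤ d + r := by
  classical
  obtain ⟨J, hdisj, hcard, hconst⟩ := h
  set U := univ.biUnion J
  have hU : #U = ∑ j, ll j := by
    rw [card_biUnion fun j _ j' _ h => hdisj j j' h]
    exact sum_congr rfl fun j _ => hcard j
  have hsplit : Set.range t ⊆ ↑((univ \ U).image t ∪ univ.biUnion fun j => (J j).image t) := by
    rintro _ ⟨i, rfl⟩
    by_cases hi : i ∈ U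
    · obtain ⟨j, -, hij⟩ := mem_biUnion.1 hi
      exact mem_union_right _ (mem_biUnion.2 ⟨j, mem_univ _, mem_image_of_mem t hij⟩)
    · exact mem_union_left _ (mem_image_of_mem t (mem_sdiff.2 ⟨mem_univ _, hi⟩))
  have hJ : ∀ j, #((J j).image t) ≤ 1 := fun j => card_le_one.2 (by
    simp only [mem_image]
    rintro _ ⟨i, hi, rfl⟩ _ ⟨i', hi', rfl⟩
    exact hconst j i hi i' hi')
  calc (Set.range t).ncard + ∑ j, ll j
      ≤ #((univ \ U).image t) + #(univ.biUnion fun j => (J j).image t) + #U := by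
        rw [hU]
        gcongr
        exact (Set.ncard_le_ncard hsplit (finite_toSet _)).trans (by
          rw [Set.ncard_coe_finset]; exact card_union_le _ _)
    _ ≤ #(univ \ U) + ∑ _j : Fin r, 1 + #U := by
        gcongr
        · exact card_image_le
        · exact card_biUnion_le.trans (sum_le_sum fun j _ => hJ j)
    _ = d + r := by
        rw [add_right_comm, card_sdiff_add_card_eq_card (subset_univ _)]
        simp

def rectDiagonal {m n R : Type*} [Zero R] [DecidableEq n] (e : m → n) (w : m → R) :
    Matrix m n R :=
  of fun i j => if e i = j then w i else 0

section MatrixAlgebra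

variable {m n : Type*}

theorem eq_rectDiagonal {R : Type*} [Zero R] [DecidableEq n] {e : m → n} {D : Matrix m n R}
    (hD : ∀ i j, e i ≠ j → D i j = 0) : D = rectDiagonal e fun i => D i (e i) := by
  ext i j
  by_cases h : e i = j
  · simp [rectDiagonal, h]
  · simp [rectDiagonal, h, hD i j h]

theorem rectDiagonal_submatrix {R : Type*} [Zero R] [DecidableEq m] [DecidableEq n] {e : m → n}
    (he : Function.Injective e) (w : m → R) : (rectDiagonal e w).submatrix id e = diagonal w := by
  ext i j
  simp [rectDiagonal, diagonal_apply, he.eq_iff]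

variable [Fintype m] [DecidableEq m] {K : Type*} [Field K]

theorem transpose_mul_mul_mul_self {Q : Matrix m m K} (hQ : Qᵀ * Q = 1) (X : Matrix m m K) :
    Qᵀ * (Q * X * Qᵀ) * Q = X := by
  simp only [← Matrix.mul_assoc, hQ, Matrix.one_mul]
  rw [Matrix.mul_assoc, hQ, Matrix.mul_one]

theorem mul_mul_transpose_eq_one {P Q : Matrix m m K} (hP : P * Pᵀ = 1) (hQ : Q * Qᵀ = 1) :
    P * Q * (P * Q)ᵀ = 1 := by
  rw [transpose_mul, Matrix.mul_assoc, ← Matrix.mul_assoc Q, hQ, Matrix.one_mul, hP]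

theorem spectrum_mul_diagonal_mul_transpose {Q : Matrix m m K} (hQ : Q * Qᵀ = 1)
    (d : m → K) : spectrum K (Q * diagonal d * Qᵀ) = Set.range d := by
  simpa using spectrum.units_conjugate (R := K) (a := diagonal d)
    (u := ⟨Q, Qᵀ, hQ, mul_eq_one_comm.1 hQ⟩)

theorem diagonal_mul_diagonal_inv {d : m → K} (hd : ∀ i, d i ≠ 0) :
    diagonal d * diagonal d⁻¹ = 1 := by
  rw [diagonal_mul_diagonal, ← diagonal_one]
  exact congrArg diagonal (funext fun i => mul_inv_cancel₀ (hd i))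

theorem diagonal_inv_mul_diagonal {d : m → K} (hd : ∀ i, d i ≠ 0) :
    diagonal d⁻¹ * diagonal d = 1 := by
  rw [diagonal_mul_diagonal, ← diagonal_one]
  exact congrArg diagonal (funext fun i => inv_mul_cancel₀ (hd i))

theorem transpose_mul_self_eq_one_of_diagonalizes [Fintype n] {B : Matrix m n K}
    {Q : Matrix m m K} {w : m → K} (hw : ∀ i, w i ≠ 0)
    (hB : Qᵀ * (B * Bᵀ) * Q = diagonal fun i => w i ^ 2) :
    (Bᵀ * Q * diagonal w⁻¹)ᵀ * (Bᵀ * Q * diagonal w⁻¹) = 1 := by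
  have : (Bᵀ * Q * diagonal w⁻¹)ᵀ * (Bᵀ * Q * diagonal w⁻¹)
      = diagonal w⁻¹ * (Qᵀ * (B * Bᵀ) * Q) * diagonal w⁻¹ := by
    simp only [transpose_mul, transpose_transpose, diagonal_transpose, Matrix.mul_assoc]
  rw [this, hB, diagonal_mul_diagonal, diagonal_mul_diagonal, ← diagonal_one]
  refine congrArg diagonal (funext fun i => ?_)
  have := hw i
  simp only [Pi.inv_apply]
  field_simp

variable [Fintype n] [DecidableEq n]

theorem mul_transpose_rectDiagonal {l R : Type*} [NonUnitalNonAssocSemiring R]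
    (P : Matrix l n R) (e : m → n) (w : m → R) :
    P * (rectDiagonal e w)ᵀ = P.submatrix id e * diagonal w := by
  ext i j
  rw [mul_diagonal]
  simp [rectDiagonal, mul_apply]

theorem rectDiagonal_mul_transpose {R : Type*} [CommSemiring R] {e : m → n}
    (he : Function.Injective e) (w : m → R) :
    rectDiagonal e w * (rectDiagonal e w)ᵀ = diagonal fun i => w i ^ 2 := by
  rw [mul_transpose_rectDiagonal, rectDiagonal_submatrix he, diagonal_mul_diagonal]
  simp [sq]

theorem diagonal_mul_eq_mul_diagonal_of_imp {a c : m → K} {b c' : n → K} {S : Matrix m n K}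
    (hS : diagonal a * S = S * diagonal b) (h : ∀ i j, a i = b j → c i = c' j) :
    diagonal c * S = S * diagonal c' := by
  ext i j
  have hij := congr_fun₂ hS i j
  rw [diagonal_mul, mul_diagonal] at hij ⊢
  by_cases hS0 : S i j = 0
  · simp [hS0]
  · rw [h i j (mul_right_cancel₀ hS0 (hij.trans (mul_comm _ _))), mul_comm]

theorem mul_transpose_eq_of_eq_rectDiagonal {A : Matrix m n K} {PL : Matrix m m K}
    {PR : Matrix n n K} {e : m → n} {d : m → K} (he : Function.Injective e)
    (hPR : PR * PRᵀ = 1) (hA : A = PL * rectDiagonal e d * PRᵀ) :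
    A * Aᵀ = PL * diagonal (fun i => d i ^ 2) * PLᵀ := by
  rw [hA, ← rectDiagonal_mul_transpose he, transpose_mul, transpose_mul, transpose_transpose]
  simp only [Matrix.mul_assoc]
  rw [← Matrix.mul_assoc PRᵀ, mul_eq_one_comm.1 hPR, Matrix.one_mul]

theorem eq_mul_rectDiagonal_mul_transpose {B : Matrix m n K} {Q : Matrix m m K}
    {V : Matrix n n K} {w : m → K} (e : m → n) (hQ : Q * Qᵀ = 1) (hw : ∀ i, w i ≠ 0)
    (hV : V.submatrix id e = Bᵀ * Q * diagonal w⁻¹) : B = Q * rectDiagonal e w * Vᵀ := by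
  have : V * (rectDiagonal e w)ᵀ = Bᵀ * Q := by
    rw [mul_transpose_rectDiagonal, hV, Matrix.mul_assoc, diagonal_inv_mul_diagonal hw,
      Matrix.mul_one]
  rw [Matrix.mul_assoc, ← transpose_transpose (rectDiagonal e w * Vᵀ), transpose_mul,
    transpose_transpose, this, transpose_mul, transpose_transpose, ← Matrix.mul_assoc, hQ,
    Matrix.one_mul]

end MatrixAlgebra

theorem exists_mul_transpose_eq_one_submatrix_eq {m n : Type*} [Fintype n] [DecidableEq m]
    [DecidableEq n] (e : m ↪ n) (R : Matrix n m ℝ) (hR : Rᵀ * R = 1) :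
    ∃ U : Matrix n n ℝ, U * Uᵀ = 1 ∧ U.submatrix id e = R := by
  let c : m → EuclideanSpace ℝ n := fun i => WithLp.toLp 2 fun k => R k i
  have hc : Orthonormal ℝ c := by
    rw [orthonormal_iff_ite]
    intro i j
    simpa [c, mul_apply, PiLp.inner_apply, one_apply, mul_comm] using congr_fun₂ hR i j
  have hv : Orthonormal ℝ ((Set.range e).domRestrict (Function.extend e c 0)) := by
    convert hc.comp _ (Equiv.ofInjective e e.injective).symm.injective
    ext ⟨_, i, rfl⟩ : 1
    simpa [Set.domRestrict] using e.injective.extend_apply c 0 i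
  obtain ⟨b, hb⟩ := hv.exists_orthonormalBasis_extension_of_card_eq (by simp)
  refine ⟨(EuclideanSpace.basisFun n ℝ).toBasis.toMatrix b, ?_, ?_⟩
  · simpa [conjTranspose_eq_transpose_of_trivial] using
      (EuclideanSpace.basisFun n ℝ).toMatrix_orthonormalBasis_self_mul_conjTranspose b
  · ext k i
    simp [Module.Basis.toMatrix_apply, hb (e i) (Set.mem_range_self i),
      e.injective.extend_apply, c]

section Limits

variable {m n α R : Type*} {l : Filter α} [TopologicalSpace R]

theorem Filter.Tendsto.matrix_mul {p : Type*} [Fintype n] [NonUnitalNonAssocSemiring R]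
    [IsTopologicalSemiring R] {A : α → Matrix m n R} {B : α → Matrix n p R} {a : Matrix m n R}
    {b : Matrix n p R} (hA : Tendsto A l (𝓝 a)) (hB : Tendsto B l (𝓝 b)) :
    Tendsto (fun x => A x * B x) l (𝓝 (a * b)) :=
  ((continuous_fst.matrix_mul continuous_snd).tendsto (a, b)).comp (hA.prodMk_nhds hB)

theorem Filter.Tendsto.matrix_transpose {A : α → Matrix m n R} {a : Matrix m n R}
    (hA : Tendsto A l (𝓝 a)) : Tendsto (fun x => (A x)ᵀ) l (𝓝 aᵀ) :=
  (continuous_id.matrix_transpose.tendsto a).comp hA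

theorem Filter.Tendsto.matrix_diagonal [Zero R] [DecidableEq m] {f : α → m → R} {a : m → R}
    (hf : Tendsto f l (𝓝 a)) : Tendsto (fun x => diagonal (f x)) l (𝓝 (diagonal a)) :=
  (continuous_id.matrix_diagonal.tendsto a).comp hf

theorem Filter.Tendsto.eventually_forall_abs_sub_lt [Finite m] {f : α → m → ℝ} {a : m → ℝ}
    (hf : Tendsto f l (𝓝 a)) {ε : ℝ} (hε : 0 < ε) : ∀ᶠ x in l, ∀ i, |f x i - a i| < ε :=
  eventually_all.2 fun i => Metric.tendsto_nhds.1 (tendsto_pi_nhds.1 hf i) ε hε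

theorem Filter.Tendsto.eventually_forall_forall_abs_sub_lt [Finite m] [Finite n]
    {A : α → Matrix m n ℝ} {a : Matrix m n ℝ} (hA : Tendsto A l (𝓝 a)) {ε : ℝ} (hε : 0 < ε) :
    ∀ᶠ x in l, ∀ i j, |A x i j - a i j| < ε :=
  eventually_all.2 fun i => (tendsto_pi_nhds.1 hA i).eventually_forall_abs_sub_lt hε

theorem exists_pos_forall_of_forall_tendsto {A : Matrix m n ℝ} {s : Set (Matrix m n ℝ)}
    {p : Matrix m n ℝ → Prop}
    (h : ∀ B : ℕ → Matrix m n ℝ, (∀ k, B k ∈ s) → Tendsto B atTop (𝓝 A) → ∃ k, p (B k)) :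
    ∃ δ > (0 : ℝ), ∀ B ∈ s, (∀ i j, |A i j - B i j| < δ) → p B := by
  by_contra! hne
  choose B hBs hBA hBp using fun k : ℕ => hne (1 / (k + 1)) Nat.one_div_pos_of_nat
  have hlim : Tendsto B atTop (𝓝 A) := tendsto_pi_nhds.2 fun i => tendsto_pi_nhds.2 fun j => by
    refine tendsto_iff_dist_tendsto_zero.2 (squeeze_zero (fun _ => dist_nonneg) (fun k => ?_)
      tendsto_one_div_add_atTop_nhds_zero_nat)
    rw [Real.dist_eq, abs_sub_comm]
    exact (hBA k i j).le
  obtain ⟨k, hk⟩ := h B hBs hlim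
  exact hBp k hk

theorem exists_subseq_tendsto_of_mul_transpose_eq_one [Fintype m] [DecidableEq m]
    {Q : ℕ → Matrix m m ℝ} (hQ : ∀ k, Q k * (Q k)ᵀ = 1) :
    ∃ Q₀ : Matrix m m ℝ, Q₀ * Q₀ᵀ = 1 ∧
      ∃ φ : ℕ → ℕ, StrictMono φ ∧ Tendsto (Q ∘ φ) atTop (𝓝 Q₀) := by
  have : FirstCountableTopology (Matrix m m ℝ) :=
    inferInstanceAs (FirstCountableTopology (m → m → ℝ))
  have hbound : ∀ Q : Matrix m m ℝ, Q * Qᵀ = 1 → ∀ i j, Q i j ∈ Set.Icc (-1 : ℝ) 1 := by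
    intro Q hQ i j
    have hU : Q ∈ unitaryGroup m ℝ := by
      rwa [mem_unitaryGroup_iff, star_eq_conjTranspose, conjTranspose_eq_transpose_of_trivial]
    exact abs_le.1 (entry_norm_bound_of_unitary hU i j)
  have hcpt : IsCompact {Q : Matrix m m ℝ | Q * Qᵀ = 1} :=
    isCompact_Icc.matrix.of_isClosed_subset (isClosed_eq (by fun_prop) continuous_const) hbound
  exact hcpt.tendsto_subseq hQ

end Limits

section Subsequences

variable {m n : Type*} [Fintype m] [Fintype n] [DecidableEq m]

theorem exists_subseq_tendsto_of_diagonalizes {A : Matrix m n ℝ} {B : ℕ → Matrix m n ℝ}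
    (hB : Tendsto B atTop (𝓝 A)) {Q : ℕ → Matrix m m ℝ} {t : ℕ → m → ℝ}
    (hQ : ∀ k, Q k * (Q k)ᵀ = 1) (ht : ∀ k i, 0 ≤ t k i)
    (hBQ : ∀ k, B k * (B k)ᵀ = Q k * diagonal (fun i => t k i ^ 2) * (Q k)ᵀ) :
    ∃ φ : ℕ → ℕ, StrictMono φ ∧ ∃ (Q₀ : Matrix m m ℝ) (f : m → ℝ), Q₀ * Q₀ᵀ = 1 ∧
      (∀ i, 0 ≤ f i) ∧ Tendsto (Q ∘ φ) atTop (𝓝 Q₀) ∧ Tendsto (t ∘ φ) atTop (𝓝 f) ∧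
      A * Aᵀ = Q₀ * diagonal (fun i => f i ^ 2) * Q₀ᵀ := by
  obtain ⟨Q₀, hQ₀, φ, hφ, hQφ⟩ := exists_subseq_tendsto_of_mul_transpose_eq_one hQ
  have hBφ := hB.comp hφ.tendsto_atTop
  have hM := (hQφ.matrix_transpose.matrix_mul (hBφ.matrix_mul hBφ.matrix_transpose)).matrix_mul hQφ
  have hdiag : ∀ k, (Q k)ᵀ * (B k * (B k)ᵀ) * Q k = diagonal fun i => t k i ^ 2 := fun k => by
    rw [hBQ, transpose_mul_mul_mul_self (mul_eq_one_comm.1 (hQ k))]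
  -- `t k i ^ 2` is a diagonal entry of `(Q k)ᵀ B Bᵀ Q k`, so `t ∘ φ` converges with no a priori
  -- bound on `t`
  set M := Q₀ᵀ * (A * Aᵀ) * Q₀
  have htφ : Tendsto (t ∘ φ) atTop (𝓝 fun i => √(M i i)) := tendsto_pi_nhds.2 fun i => by
    have := (Real.continuous_sqrt.tendsto _).comp (tendsto_pi_nhds.1 (tendsto_pi_nhds.1 hM i) i)
    convert this using 2 with k
    simp [hdiag, Real.sqrt_sq (ht _ i)]
  refine ⟨φ, hφ, Q₀, fun i => √(M i i), hQ₀, fun i => Real.sqrt_nonneg _, hQφ, htφ, ?_⟩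
  refine tendsto_nhds_unique (hBφ.matrix_mul hBφ.matrix_transpose) ?_
  simp only [Function.comp_apply, hBQ]
  have ht2 : Tendsto (fun k i => t (φ k) i ^ 2) atTop (𝓝 fun i => √(M i i) ^ 2) :=
    tendsto_pi_nhds.2 fun i => (tendsto_pi_nhds.1 htφ i).pow 2
  exact (hQφ.matrix_mul ht2.matrix_diagonal).matrix_mul hQφ.matrix_transpose

theorem exists_diagonalizing_tendsto {Q₀ PL : Matrix m m ℝ} {f dD : m → ℝ}
    (hQ₀ : Q₀ * Q₀ᵀ = 1) (hPL : PL * PLᵀ = 1) (hf : ∀ i, 0 ≤ f i)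
    (hfD : Q₀ * diagonal (fun i => f i ^ 2) * Q₀ᵀ = PL * diagonal (fun i => dD i ^ 2) * PLᵀ)
    {B : ℕ → Matrix m n ℝ} {Q : ℕ → Matrix m m ℝ} {t : ℕ → m → ℝ}
    (hQo : ∀ k, Q k * (Q k)ᵀ = 1)
    (hBQ : ∀ k, B k * (B k)ᵀ = Q k * diagonal (fun i => t k i ^ 2) * (Q k)ᵀ)
    (hQ : Tendsto Q atTop (𝓝 Q₀)) (ht : Tendsto t atTop (𝓝 f))
    (hlev : ∀ᶠ k in atTop, ∀ i j, f i = f j → t k i = t k j) :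
    ∃ QL : ℕ → Matrix m m ℝ, (∀ k, QL k * (QL k)ᵀ = 1) ∧ Tendsto QL atTop (𝓝 PL) ∧
      ∃ w : ℕ → m → ℝ, Tendsto w atTop (𝓝 dD) ∧
        ∀ᶠ k in atTop, (QL k)ᵀ * (B k * (B k)ᵀ) * QL k = diagonal fun i => w k i ^ 2 := by
  set S := Q₀ᵀ * PL
  have hSS : S * Sᵀ = 1 :=
    mul_mul_transpose_eq_one (by rw [transpose_transpose, mul_eq_one_comm.1 hQ₀]) hPL
  have hint : diagonal (fun i => f i ^ 2) * S = S * diagonal (fun i => dD i ^ 2) :=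
    calc _ = Q₀ᵀ * (Q₀ * diagonal (fun i => f i ^ 2) * Q₀ᵀ) * PL := by
          simp only [S, ← Matrix.mul_assoc, mul_eq_one_comm.1 hQ₀, Matrix.one_mul]
      _ = Q₀ᵀ * (PL * diagonal (fun i => dD i ^ 2) * PLᵀ) * PL := by rw [hfD]
      _ = S * diagonal (fun i => dD i ^ 2) := by
          simp only [S, Matrix.mul_assoc, mul_eq_one_comm.1 hPL, Matrix.mul_one]
  have hσ : ∀ j, ∃ i, f i = |dD j| := fun j => by
    have : dD j ^ 2 ∈ Set.range fun i => f i ^ 2 := by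
      rw [← spectrum_mul_diagonal_mul_transpose hQ₀, hfD,
        spectrum_mul_diagonal_mul_transpose hPL]
      exact ⟨j, rfl⟩
    obtain ⟨i, hi⟩ := this
    exact ⟨i, (pow_left_inj₀ (hf i) (abs_nonneg _) two_ne_zero).1 (hi.trans (sq_abs _).symm)⟩
  choose σ hσ using hσ
  -- the signs make `w k j` tend to `dD j` rather than to `|dD j|`
  set w : ℕ → m → ℝ := fun k j => if dD j < 0 then -t k (σ j) else t k (σ j)
  refine ⟨fun k => Q k * S, fun k => mul_mul_transpose_eq_one (hQo k) hSS, ?_, w, ?_, ?_⟩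
  · simpa [S, ← Matrix.mul_assoc, hQ₀] using hQ.matrix_mul (tendsto_const_nhds (x := S))
  · refine tendsto_pi_nhds.2 fun j => ?_
    have htj := tendsto_pi_nhds.1 ht (σ j)
    by_cases hj : dD j < 0
    · simpa [w, hj, hσ, abs_of_neg hj] using htj.neg
    · simpa [w, hj, hσ, abs_of_nonneg (not_lt.1 hj)] using htj
  · filter_upwards [hlev] with k hk
    -- `t k` is constant where `f` is, so `S` also intertwines the squared singular values
    have hint_k : diagonal (fun i => t k i ^ 2) * S = S * diagonal fun j => w k j ^ 2 :=
      diagonal_mul_eq_mul_diagonal_of_imp hint fun i j hij => by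
        have : f i = f (σ j) :=
          (pow_left_inj₀ (hf i) (hf _) two_ne_zero).1 (by rw [hij, hσ, sq_abs])
        simp only [w, hk i (σ j) this]
        split_ifs <;> ring
    calc (Q k * S)ᵀ * (B k * (B k)ᵀ) * (Q k * S)
        = Sᵀ * ((Q k)ᵀ * (Q k * diagonal (fun i => t k i ^ 2) * (Q k)ᵀ) * Q k) * S := by
          rw [hBQ, transpose_mul]; simp only [Matrix.mul_assoc]
      _ = Sᵀ * S * diagonal fun j => w k j ^ 2 := by
          rw [transpose_mul_mul_mul_self (mul_eq_one_comm.1 (hQo k)), Matrix.mul_assoc, hint_k,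
            ← Matrix.mul_assoc]
      _ = diagonal fun j => w k j ^ 2 := by rw [mul_eq_one_comm.1 hSS, Matrix.one_mul]

variable [DecidableEq n]

theorem exists_subseq_orthogonal_tendsto (e : m ↪ n) {P : Matrix n n ℝ} (hP : P * Pᵀ = 1)
    {R : ℕ → Matrix n m ℝ} (hR : ∀ᶠ k in atTop, (R k)ᵀ * R k = 1)
    (hRP : Tendsto R atTop (𝓝 (P.submatrix id e))) :
    ∃ φ : ℕ → ℕ, StrictMono φ ∧ ∃ V : ℕ → Matrix n n ℝ, (∀ k, V k * (V k)ᵀ = 1) ∧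
      Tendsto V atTop (𝓝 P) ∧ ∀ᶠ k in atTop, (V k).submatrix id e = R (φ k) := by
  have hU : ∀ k, ∃ U : Matrix n n ℝ, U * Uᵀ = 1 ∧
      ((R k)ᵀ * R k = 1 → U.submatrix id e = R k) := fun k => by
    by_cases h : (R k)ᵀ * R k = 1
    · obtain ⟨U, hU, hUR⟩ := exists_mul_transpose_eq_one_submatrix_eq e (R k) h
      exact ⟨U, hU, fun _ => hUR⟩
    · exact ⟨1, by simp, fun h' => absurd h' h⟩
  choose U hU hUR using hU
  obtain ⟨U₀, hU₀, φ, hφ, hlim⟩ := exists_subseq_tendsto_of_mul_transpose_eq_one hU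
  have hUφ : ∀ᶠ k in atTop, (U (φ k)).submatrix id e = R (φ k) :=
    (hφ.tendsto_atTop.eventually hR).mono fun k hk => hUR _ hk
  have hU₀e : U₀.submatrix id e = P.submatrix id e :=
    tendsto_nhds_unique (((continuous_id.matrix_submatrix id e).tendsto U₀).comp hlim)
      ((hRP.comp hφ.tendsto_atTop).congr' (hUφ.mono fun k hk => hk.symm))
  -- `U₀ᵀ * P` is orthogonal and fixes the columns indexed by `e`
  have hT : (U₀ᵀ * P).submatrix id e = (1 : Matrix n n ℝ).submatrix id e := by
    change U₀ᵀ * P.submatrix id e = _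
    rw [← hU₀e]
    change (U₀ᵀ * U₀).submatrix id e = _
    rw [mul_eq_one_comm.1 hU₀]
  have hTT : U₀ᵀ * P * (U₀ᵀ * P)ᵀ = 1 :=
    mul_mul_transpose_eq_one (by rw [transpose_transpose, mul_eq_one_comm.1 hU₀]) hP
  refine ⟨φ, hφ, fun k => U (φ k) * (U₀ᵀ * P), fun k => mul_mul_transpose_eq_one (hU _) hTT,
    ?_, hUφ.mono fun k hk => ?_⟩
  · simpa [← Matrix.mul_assoc, hU₀] using hlim.matrix_mul (tendsto_const_nhds (x := U₀ᵀ * P))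
  · change U (φ k) * (U₀ᵀ * P).submatrix id e = _
    rw [hT, ← hk]
    change (U (φ k) * 1).submatrix id e = _
    rw [Matrix.mul_one]

theorem exists_subseq_svd_tendsto (e : m ↪ n) {A : Matrix m n ℝ} {PL : Matrix m m ℝ}
    {PR : Matrix n n ℝ} {dD : m → ℝ} (hPL : PLᵀ * PL = 1) (hPR : PR * PRᵀ = 1)
    (hA : A = PL * rectDiagonal e dD * PRᵀ) (hdD : ∀ i, dD i ≠ 0) {B : ℕ → Matrix m n ℝ}
    (hB : Tendsto B atTop (𝓝 A)) {QL : ℕ → Matrix m m ℝ} {w : ℕ → m → ℝ}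
    (hQLo : ∀ k, QL k * (QL k)ᵀ = 1) (hQL : Tendsto QL atTop (𝓝 PL))
    (hw : Tendsto w atTop (𝓝 dD))
    (hdiag : ∀ᶠ k in atTop, (QL k)ᵀ * (B k * (B k)ᵀ) * QL k = diagonal fun i => w k i ^ 2) :
    ∃ φ : ℕ → ℕ, StrictMono φ ∧ ∃ QR : ℕ → Matrix n n ℝ, (∀ k, QR k * (QR k)ᵀ = 1) ∧
      Tendsto QR atTop (𝓝 PR) ∧
      ∀ᶠ k in atTop, B (φ k) = QL (φ k) * rectDiagonal e (w (φ k)) * (QR k)ᵀ := by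
  have hw0 : ∀ᶠ k in atTop, ∀ i, w k i ≠ 0 :=
    eventually_all.2 fun i => (tendsto_pi_nhds.1 hw i).eventually_ne (hdD i)
  have hR : Tendsto (fun k => (B k)ᵀ * QL k * diagonal (w k)⁻¹) atTop
      (𝓝 (PR.submatrix id e)) := by
    have hinv : Tendsto (fun k => (w k)⁻¹) atTop (𝓝 dD⁻¹) :=
      tendsto_pi_nhds.2 fun i => (tendsto_pi_nhds.1 hw i).inv₀ (hdD i)
    convert (hB.matrix_transpose.matrix_mul hQL).matrix_mul hinv.matrix_diagonal using 2
    calc PR.submatrix id e = PR * (rectDiagonal e dD)ᵀ * (PLᵀ * PL) * diagonal dD⁻¹ := by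
          rw [hPL, Matrix.mul_one, mul_transpose_rectDiagonal, Matrix.mul_assoc,
            diagonal_mul_diagonal_inv hdD, Matrix.mul_one]
      _ = Aᵀ * PL * diagonal dD⁻¹ := by
          simp only [hA, transpose_mul, transpose_transpose, Matrix.mul_assoc]
  have hRR := (hdiag.and hw0).mono fun k hk =>
    transpose_mul_self_eq_one_of_diagonalizes hk.2 hk.1
  obtain ⟨φ, hφ, QR, hQR, hQRlim, hQRe⟩ := exists_subseq_orthogonal_tendsto e hPR hRR hR
  refine ⟨φ, hφ, QR, hQR, hQRlim, ?_⟩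
  filter_upwards [hφ.tendsto_atTop.eventually (hdiag.and hw0), hQRe] with k hk hke
  exact eq_mul_rectDiagonal_mul_transpose e (hQLo _) hk.2 hke

theorem exists_subseq_svd_tendsto_of_diagonalizes (e : m ↪ n) {A : Matrix m n ℝ}
    {PL : Matrix m m ℝ} {PR : Matrix n n ℝ} {dD : m → ℝ} (hPL : PL * PLᵀ = 1)
    (hPR : PR * PRᵀ = 1) (hA : A = PL * rectDiagonal e dD * PRᵀ)
    (h0 : (0 : ℝ) ∉ spectrum ℝ (A * Aᵀ)) {B : ℕ → Matrix m n ℝ} (hB : Tendsto B atTop (𝓝 A))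
    {Q : ℕ → Matrix m m ℝ} {t : ℕ → m → ℝ} (hQ : ∀ k, Q k * (Q k)ᵀ = 1)
    (ht : ∀ k i, 0 ≤ t k i)
    (hBQ : ∀ k, B k * (B k)ᵀ = Q k * diagonal (fun i => t k i ^ 2) * (Q k)ᵀ)
    (hcount : ∀ k, (Set.range (t k)).ncard ≤ (spectrum ℝ (A * Aᵀ)).ncard) :
    ∃ φ : ℕ → ℕ, StrictMono φ ∧ ∃ (QL : ℕ → Matrix m m ℝ) (QR : ℕ → Matrix n n ℝ)
      (w : ℕ → m → ℝ), Tendsto QL atTop (𝓝 PL) ∧ Tendsto QR atTop (𝓝 PR) ∧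
      Tendsto w atTop (𝓝 dD) ∧ ∀ᶠ k in atTop, QL k * (QL k)ᵀ = 1 ∧ QR k * (QR k)ᵀ = 1 ∧
        B (φ k) = QL k * rectDiagonal e (w k) * (QR k)ᵀ ∧
        (0 : ℝ) ∉ spectrum ℝ (B (φ k) * (B (φ k))ᵀ) ∧
        (spectrum ℝ (B (φ k) * (B (φ k))ᵀ)).ncard = (spectrum ℝ (A * Aᵀ)).ncard := by
  obtain ⟨φ, hφ, Q₀, f, hQ₀, hf, hQφ, htφ, hAQ₀⟩ :=
    exists_subseq_tendsto_of_diagonalizes hB hQ ht hBQ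
  have hAPL := mul_transpose_eq_of_eq_rectDiagonal e.injective hPR hA
  have hspecA : spectrum ℝ (A * Aᵀ) = Set.range fun i => f i ^ 2 := by
    rw [hAQ₀, spectrum_mul_diagonal_mul_transpose hQ₀]
  have hf0 : ∀ i, 0 < f i := fun i => (hf i).lt_of_ne fun h =>
    h0 (hspecA ▸ ⟨i, by simp [← h]⟩)
  have hdD0 : ∀ i, dD i ≠ 0 := fun i h =>
    h0 (by rw [hAPL, spectrum_mul_diagonal_mul_transpose hPL]; exact ⟨i, by simp [h]⟩)
  have hcardf : (spectrum ℝ (A * Aᵀ)).ncard = (Set.range f).ncard := by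
    rw [hspecA, ncard_range_sq_eq hf fun _ _ => Iff.rfl]
  have hlev := eventually_forall_eq_iff_of_tendsto htφ fun k => (hcount (φ k)).trans_eq hcardf
  obtain ⟨QL, hQL, hQLlim, w, hw, hdiag⟩ :=
    exists_diagonalizing_tendsto hQ₀ hPL hf (hAQ₀.symm.trans hAPL) (fun k => hQ (φ k))
      (fun k => hBQ (φ k)) hQφ htφ (hlev.mono fun k hk i j => (hk i j).2)
  obtain ⟨ψ, hψ, QR, hQR, hQRlim, hsvd⟩ := exists_subseq_svd_tendsto e
    (mul_eq_one_comm.1 hPL) hPR hA hdD0 (hB.comp hφ.tendsto_atTop) hQL hQLlim hw hdiag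
  have hpos : ∀ᶠ k in atTop, ∀ i, 0 < t (φ k) i :=
    eventually_all.2 fun i => (tendsto_pi_nhds.1 htφ i).eventually (eventually_gt_nhds (hf0 i))
  refine ⟨φ ∘ ψ, hφ.comp hψ, QL ∘ ψ, QR, w ∘ ψ, hQLlim.comp hψ.tendsto_atTop, hQRlim,
    hw.comp hψ.tendsto_atTop, ?_⟩
  filter_upwards [hψ.tendsto_atTop.eventually (hlev.and hpos), hsvd] with k hk hsvdk
  rw [Function.comp_apply, hBQ, spectrum_mul_diagonal_mul_transpose (hQ _)]
  refine ⟨hQL _, hQR k, hsvdk, fun ⟨i, hi⟩ => (hk.2 i).ne' ((pow_eq_zero_iff two_ne_zero).1 hi),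
    ?_⟩
  rw [hcardf]
  exact ncard_range_sq_eq (ht _) hk.1

end Subsequences

theorem stmt16_general (d₁ d₂ r : ℕ) (hd₁₂ : d₁ ≤ d₂)
    (ll : Fin r → ℕ)
    (A : Matrix (Fin d₁) (Fin d₂) ℝ)
    (PL : Matrix (Fin d₁) (Fin d₁) ℝ) (PR : Matrix (Fin d₂) (Fin d₂) ℝ)
    (D : Matrix (Fin d₁) (Fin d₂) ℝ)
    (hPL : PL * PLᵀ = 1 ∧ PLᵀ * PL = 1) (hPR : PR * PRᵀ = 1 ∧ PRᵀ * PR = 1)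
    (hD : ∀ i : Fin d₁, ∀ j : Fin d₂, (i : ℕ) ≠ (j : ℕ) → D i j = 0)
    (hSVD : A = PL * D * PRᵀ)
    (h0 : (0 : ℝ) ∉ spectrum ℝ (A * Aᵀ))
    (hspec : (spectrum ℝ (A * Aᵀ)).ncard = d₁ + r - ∑ j, ll j)
    (ε : ℝ) (hε : 0 < ε) :
    ∃ δ > (0 : ℝ), ∀ B ∈ RectRealCollide d₁ d₂ r ll,
      (∀ i : Fin d₁, ∀ j : Fin d₂, |A i j - B i j| < δ) →
      (0 : ℝ) ∉ spectrum ℝ (B * Bᵀ) ∧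
      (spectrum ℝ (B * Bᵀ)).ncard = d₁ + r - ∑ j, ll j ∧
      ∃ (QL : Matrix (Fin d₁) (Fin d₁) ℝ) (QR : Matrix (Fin d₂) (Fin d₂) ℝ)
        (F : Matrix (Fin d₁) (Fin d₂) ℝ),
        (QL * QLᵀ = 1 ∧ QLᵀ * QL = 1) ∧ (QR * QRᵀ = 1 ∧ QRᵀ * QR = 1) ∧
        (∀ i : Fin d₁, ∀ j : Fin d₂, (i : ℕ) ≠ (j : ℕ) → F i j = 0) ∧
        B = QL * F * QRᵀ ∧
        (∀ i : Fin d₁, |D i (Fin.castLE hd₁₂ i) - F i (Fin.castLE hd₁₂ i)| < ε) ∧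
        (∀ i j : Fin d₁, |QL i j - PL i j| < ε) ∧
        (∀ i j : Fin d₂, |QR i j - PR i j| < ε) := by
  set e := Fin.castLEEmb hd₁₂
  have hD' : D = rectDiagonal e fun i => D i (e i) :=
    eq_rectDiagonal fun i j hij => hD i j fun h => hij (Fin.ext h)
  refine exists_pos_forall_of_forall_tendsto fun B hBM hB => ?_
  choose t ht hQ hcol using hBM
  choose Q hQ _ hBQ using hQ
  obtain ⟨φ, -, QL, QR, w, hQL, hQR, hw, hev⟩ :=
    exists_subseq_svd_tendsto_of_diagonalizes e hPL.1 hPR.1 (hD' ▸ hSVD) h0 hB hQ ht hBQ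
      fun k => by have := (hcol k).ncard_range_add_sum_le; omega
  obtain ⟨k, ⟨hQLk, hQRk, hBk, h0k, hspeck⟩, hQLε, hQRε, hwε⟩ :=
    (hev.and ((hQL.eventually_forall_forall_abs_sub_lt hε).and
      ((hQR.eventually_forall_forall_abs_sub_lt hε).and
        (hw.eventually_forall_abs_sub_lt hε)))).exists
  refine ⟨φ k, h0k, hspeck.trans hspec, QL k, QR k, rectDiagonal e (w k),
    ⟨hQLk, mul_eq_one_comm.1 hQLk⟩, ⟨hQRk, mul_eq_one_comm.1 hQRk⟩,
    fun i j hij => if_neg fun h => hij (congrArg Fin.val h), hBk, fun i => ?_, hQLε, hQRε⟩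
  simpa [rectDiagonal, e, abs_sub_comm] using hwε i

/-- continuity of the singular value decomposition on
`M_ℝ(d₁ × d₂; l_1, …, l_r)` near a matrix `A` such that `0` is not an eigenvalue of `A Aᵀ`
and `A Aᵀ` has exactly `l = d₁ - ∑_j (l_j - 1)` distinct eigenvalues. -/
theorem stmt16 (d₁ d₂ r : ℕ) (hd₁ : 2 ≤ d₁) (hd₁₂ : d₁ ≤ d₂) (hr : 1 ≤ r)
    (ll : Fin r → ℕ) (hll : ∀ j, 2 ≤ ll j ∧ ll j ≤ d₁) (hsum : ∑ j, ll j ≤ d₁)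
    (A : Matrix (Fin d₁) (Fin d₂) ℝ) (hA : A ∈ RectRealCollide d₁ d₂ r ll)
    (PL : Matrix (Fin d₁) (Fin d₁) ℝ) (PR : Matrix (Fin d₂) (Fin d₂) ℝ)
    (D : Matrix (Fin d₁) (Fin d₂) ℝ)
    (hPL : PL * PLᵀ = 1 ∧ PLᵀ * PL = 1) (hPR : PR * PRᵀ = 1 ∧ PRᵀ * PR = 1)
    (hD : ∀ i : Fin d₁, ∀ j : Fin d₂, (i : ℕ) ≠ (j : ℕ) → D i j = 0)
    (hSVD : A = PL * D * PRᵀ)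
    (h0 : (0 : ℝ) ∉ spectrum ℝ (A * Aᵀ))
    (hspec : (spectrum ℝ (A * Aᵀ)).ncard = d₁ + r - ∑ j, ll j)
    (ε : ℝ) (hε : 0 < ε) :
    ∃ δ > (0 : ℝ), ∀ B ∈ RectRealCollide d₁ d₂ r ll,
      (∀ i : Fin d₁, ∀ j : Fin d₂, |A i j - B i j| < δ) →
      (0 : ℝ) ∉ spectrum ℝ (B * Bᵀ) ∧
      (spectrum ℝ (B * Bᵀ)).ncard = d₁ + r - ∑ j, ll j ∧
      ∃ (QL : Matrix (Fin d₁) (Fin d₁) ℝ) (QR : Matrix (Fin d₂) (Fin d₂) ℝ)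
        (F : Matrix (Fin d₁) (Fin d₂) ℝ),
        (QL * QLᵀ = 1 ∧ QLᵀ * QL = 1) ∧ (QR * QRᵀ = 1 ∧ QRᵀ * QR = 1) ∧
        (∀ i : Fin d₁, ∀ j : Fin d₂, (i : ℕ) ≠ (j : ℕ) → F i j = 0) ∧
        B = QL * F * QRᵀ ∧
        (∀ i : Fin d₁, |D i (Fin.castLE hd₁₂ i) - F i (Fin.castLE hd₁₂ i)| < ε) ∧
        (∀ i j : Fin d₁, |QL i j - PL i j| < ε) ∧
        (∀ i j : Fin d₂, |QR i j - PR i j| < ε) :=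
  stmt16_general d₁ d₂ r hd₁₂ ll A PL PR D hPL hPR hD hSVD h0 hspec ε hε
end
end
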